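/- arXiv:2602.23727 — 11 statements merged into one kernel-verified Lean document; each statement's English description precedes it below -/
import Mathlib

section
/- Let f : ℝ^m → ℝ be differentiable, convex and L-smooth, let M be a real n×m matrix, and let (x*, y*) ∈ ℝ^m × ℝ^n satisfy ∇f(x*) + Mᵀy* = 0. Let t > 0 and α > 0. Then for any z ∈ ℝ^m and any y⁺ ∈ ℝ^n, setting x⁺ = z − t(∇f(z) + Mᵀy⁺), one has: D_f(x⁺, x*) ≤ (1 + 4Lαt)·D_f(z, x*) − t·(1 − (L/2)t − 2α)·‖∇f(z) + Mᵀy⁺‖² − αt·‖Mᵀ(y⁺ − y*)‖² + t·⟪Mᵀ(y⁺ − y*), ∇f(z) + Mᵀy⁺⟫. -/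
open scoped RealInnerProductSpace
open Matrix

/-- Bregman divergence `D_f(a, b) = f a - f b - ⟪∇f b, a - b⟫`. -/
noncomputable def Df {E : Type*} [NormedAddCommGroup E] [InnerProductSpace ℝ E]
    (f : E → ℝ) (f' : E → E) (a b : E) : ℝ :=
  f a - f b - ⟪f' b, a - b⟫

set_option maxHeartbeats 1000000

theorem stmt5 (m n : ℕ)
    (f : EuclideanSpace ℝ (Fin m) → ℝ)
    (f' : EuclideanSpace ℝ (Fin m) → EuclideanSpace ℝ (Fin m))
    (L : ℝ) (hL : 0 < L)
    (hdiff : ∀ x, HasGradientAt f (f' x) x)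
    (hconvex : ∀ x x', f x + ⟪f' x, x' - x⟫ ≤ f x')
    (hsmooth : ∀ x x', f x' ≤ f x + ⟪f' x, x' - x⟫ + L / 2 * ‖x' - x‖ ^ 2)
    (M : Matrix (Fin n) (Fin m) ℝ)
    (xs : EuclideanSpace ℝ (Fin m)) (ys : EuclideanSpace ℝ (Fin n))
    (hsaddle : f' xs + Matrix.toEuclideanLin Mᵀ ys = 0)
    (t α : ℝ) (ht : 0 < t) (hα : 0 < α)
    (z : EuclideanSpace ℝ (Fin m)) (yp : EuclideanSpace ℝ (Fin n))
    (xp : EuclideanSpace ℝ (Fin m))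
    (hxp : xp = z - t • (f' z + Matrix.toEuclideanLin Mᵀ yp)) :
    Df f f' xp xs ≤ (1 + 4 * L * α * t) * Df f f' z xs
      - t * (1 - L / 2 * t - 2 * α) * ‖f' z + Matrix.toEuclideanLin Mᵀ yp‖ ^ 2
      - α * t * ‖Matrix.toEuclideanLin Mᵀ (yp - ys)‖ ^ 2
      + t * ⟪Matrix.toEuclideanLin Mᵀ (yp - ys), f' z + Matrix.toEuclideanLin Mᵀ yp⟫ := by
  set T := Matrix.toEuclideanLin Mᵀ with hT
  set g := f' z + T yp with hg
  set d := f' z - f' xs with hd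
  have hTys : T ys = - f' xs := eq_neg_of_add_eq_zero_right hsaddle
  have hu : T (yp - ys) = g - d := by
    rw [map_sub, hTys, hg, hd]; abel
  -- cocoercivity: ‖d‖² ≤ 2 L Df(z, xs)
  have hco : ‖d‖ ^ 2 ≤ 2 * L * Df f f' z xs := by
    set w := z - L⁻¹ • d with hw
    have h1 := hsmooth z w
    have h2 := hconvex xs w
    have hwz : w - z = -(L⁻¹ • d) := by rw [hw]; abel
    have hwxs : w - xs = (z - xs) - L⁻¹ • d := by rw [hw]; abel
    rw [hwz] at h1
    rw [hwxs] at h2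
    rw [inner_neg_right, real_inner_smul_right] at h1
    rw [inner_sub_right, real_inner_smul_right] at h2
    have hnorm : ‖-(L⁻¹ • d)‖ ^ 2 = L⁻¹ ^ 2 * ‖d‖ ^ 2 := by
      rw [norm_neg, norm_smul, mul_pow, Real.norm_eq_abs, sq_abs]
    rw [hnorm] at h1
    have hip : ⟪f' z, d⟫ - ⟪f' xs, d⟫ = ‖d‖ ^ 2 := by
      rw [← inner_sub_left, ← hd, real_inner_self_eq_norm_sq]
    have hipL : L⁻¹ * ⟪f' z, d⟫ - L⁻¹ * ⟪f' xs, d⟫ = L⁻¹ * ‖d‖ ^ 2 := by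
      rw [← mul_sub, hip]
    have hkey : L⁻¹ * ‖d‖ ^ 2 - L / 2 * (L⁻¹ ^ 2 * ‖d‖ ^ 2) ≤ Df f f' z xs := by
      unfold Df; linarith
    have hmul := mul_le_mul_of_nonneg_left hkey (by positivity : (0:ℝ) ≤ 2 * L)
    have heq : 2 * L * (L⁻¹ * ‖d‖ ^ 2 - L / 2 * (L⁻¹ ^ 2 * ‖d‖ ^ 2)) = ‖d‖ ^ 2 := by
      field_simp
      ring
    linarith [hmul, heq.symm.le, heq.le]
  have h1 := hsmooth z xp
  have hxz : xp - z = -(t • g) := by rw [hxp]; abel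
  have hxxs : xp - xs = (z - xs) - t • g := by rw [hxp]; abel
  rw [hxz] at h1
  rw [inner_neg_right, real_inner_smul_right] at h1
  have hnorm : ‖-(t • g)‖ ^ 2 = t ^ 2 * ‖g‖ ^ 2 := by
    rw [norm_neg, norm_smul, mul_pow, Real.norm_eq_abs, sq_abs]
  rw [hnorm] at h1
  have hipg : ⟪f' z, g⟫ - ⟪f' xs, g⟫ = ⟪d, g⟫ := by
    rw [← inner_sub_left, ← hd]
  have hUG : ‖g - d‖ ^ 2 = ‖g‖ ^ 2 - 2 * ⟪d, g⟫ + ‖d‖ ^ 2 := by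
    rw [← real_inner_self_eq_norm_sq, inner_sub_sub_self, real_inner_self_eq_norm_sq,
      real_inner_self_eq_norm_sq, real_inner_comm]
    try ring
  have hGD : (0:ℝ) ≤ ‖g‖ ^ 2 + 2 * ⟪d, g⟫ + ‖d‖ ^ 2 := by
    have h : ‖g + d‖ ^ 2 = ‖g‖ ^ 2 + 2 * ⟪d, g⟫ + ‖d‖ ^ 2 := by
      rw [← real_inner_self_eq_norm_sq, real_inner_add_add_self, real_inner_self_eq_norm_sq,
        real_inner_self_eq_norm_sq, real_inner_comm]
      try ring
    rw [← h]; positivity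
  have hipug : ⟪T (yp - ys), g⟫ = ‖g‖ ^ 2 - ⟪d, g⟫ := by
    rw [hu, inner_sub_left, real_inner_self_eq_norm_sq]
  rw [hipug, hu, hUG]
  have hDxp : Df f f' xp xs = f xp - f xs - ⟪f' xs, z - xs⟫ + t * ⟪f' xs, g⟫ := by
    unfold Df
    rw [hxxs, inner_sub_right, real_inner_smul_right]; ring
  have hDz : Df f f' z xs = f z - f xs - ⟪f' xs, z - xs⟫ := rfl
  have htipg : t * ⟪f' z, g⟫ - t * ⟪f' xs, g⟫ = t * ⟪d, g⟫ := by
    rw [← mul_sub, hipg]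
  have hDle : Df f f' xp xs ≤ Df f f' z xs - t * ⟪d, g⟫ + L / 2 * (t ^ 2 * ‖g‖ ^ 2) := by
    rw [hDxp, hDz]; linarith
  have hαt : (0:ℝ) ≤ α * t := by positivity
  nlinarith [mul_nonneg hαt (sub_nonneg.mpr hco), mul_nonneg hαt hGD, hDle]
end

section
/- Let f : ℝ^m → ℝ be differentiable and μ-strongly convex (μ > 0), let M be a real n×m matrix, and let (x*, y*) satisfy ∇f(x*) + Mᵀy* = 0. Let t > 0, Π > 1 and ξ ≥ 1 satisfy Π·ξ·μ·t ≥ 1, and set τ = (ξ − 1)/(1 − 1/Π) and γ = (ξ − 1)/(τ + 1). Then for any x, z ∈ ℝ^m and any y⁺ ∈ ℝ^n, setting x̂ = ξz − (ξ−1)x, x⁺ = z − t(∇f(z) + Mᵀy⁺), z⁺ = (1+γ)x⁺ − γx, v = (1+τ)z − τx, and v⁺ = (1+τ)z⁺ − τx⁺, one has: ‖v⁺ − x*‖² ≤ (1 − 1/Π)·‖v − x*‖² − 2ξ²t·D_f(z, x*) + 2ξ(ξ − 1)t·D_f(x, x*) − 2ξt·⟪Mᵀ(y⁺ − y*), x̂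 − x*⟫ + ξ²t²·‖∇f(z) + Mᵀy⁺‖². -/
open scoped RealInnerProductSpace
open Matrix

private lemma expand_sq {m : ℕ} (c d : ℝ) (a b : EuclideanSpace ℝ (Fin m)) :
    ‖c • a - d • b‖ ^ 2 = c^2*‖a‖^2 - 2*(c*d)*⟪a,b⟫ + d^2*‖b‖^2 := by
  rw [norm_sub_sq_real, real_inner_smul_left, real_inner_smul_right, norm_smul, norm_smul,
    mul_pow, mul_pow, Real.norm_eq_abs, Real.norm_eq_abs, sq_abs, sq_abs]
  ring

private lemma quad_ineq (θ τ μt na nb p : ℝ) (hθ0 : 0 < θ) (h1mθ : 0 ≤ 1-θ) (hτ0 : 0 ≤ τ)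
    (hμt0 : 0 ≤ μt) (hAB : 1-θ ≤ (1+τ*θ)*μt) (hq : 0 ≤ na^2 - 2*p + nb^2) :
    (1+τ*θ)^2*na^2 - 2*((1+τ*θ)*(τ*θ))*p + (τ*θ)^2*nb^2
      ≤ θ*((1+τ)^2*na^2 - 2*((1+τ)*τ)*p + τ^2*nb^2)
        + (1+τ*θ)*μt*na^2 + (1+τ*θ)*(τ*θ)*μt*(na^2-2*p+nb^2) := by
  have hτθ0 : (0:ℝ) ≤ τ*θ := mul_nonneg hτ0 hθ0.le
  have hB : (0:ℝ) ≤ τ^2*θ*(1-θ) + (1+τ*θ)*(τ*θ)*μt :=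
    add_nonneg (mul_nonneg (mul_nonneg (sq_nonneg τ) hθ0.le) h1mθ)
      (mul_nonneg (mul_nonneg (by linarith) hτθ0) hμt0)
  nlinarith [mul_nonneg hB hq, mul_nonneg (sub_nonneg.2 hAB) (sq_nonneg na)]

set_option maxHeartbeats 2000000 in
theorem stmt6 (m n : ℕ)
    (f : EuclideanSpace ℝ (Fin m) → ℝ)
    (f' : EuclideanSpace ℝ (Fin m) → EuclideanSpace ℝ (Fin m))
    (μ : ℝ) (hμ : 0 < μ)
    (hdiff : ∀ x, HasGradientAt f (f' x) x)
    (hsc : ∀ x x', f x + ⟪f' x, x' - x⟫ + μ / 2 * ‖x' - x‖ ^ 2 ≤ f x')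
    (M : Matrix (Fin n) (Fin m) ℝ)
    (xs : EuclideanSpace ℝ (Fin m)) (ys : EuclideanSpace ℝ (Fin n))
    (hsaddle : f' xs + Matrix.toEuclideanLin Mᵀ ys = 0)
    (t Pii ξ τ γ : ℝ) (ht : 0 < t) (hPii : 1 < Pii) (hξ : 1 ≤ ξ)
    (hPiiξμt : 1 ≤ Pii * ξ * μ * t)
    (hτ : τ = (ξ - 1) / (1 - 1 / Pii))
    (hγ : γ = (ξ - 1) / (τ + 1))
    (x z : EuclideanSpace ℝ (Fin m)) (yp : EuclideanSpace ℝ (Fin n))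
    (xhat xp zp v vp : EuclideanSpace ℝ (Fin m))
    (hxhat : xhat = ξ • z - (ξ - 1) • x)
    (hxp : xp = z - t • (f' z + Matrix.toEuclideanLin Mᵀ yp))
    (hzp : zp = (1 + γ) • xp - γ • x)
    (hv : v = (1 + τ) • z - τ • x)
    (hvp : vp = (1 + τ) • zp - τ • xp) :
    ‖vp - xs‖ ^ 2 ≤ (1 - 1 / Pii) * ‖v - xs‖ ^ 2
      - 2 * ξ ^ 2 * t * Df f f' z xs
      + 2 * ξ * (ξ - 1) * t * Df f f' x xs
      - 2 * ξ * t * ⟪Matrix.toEuclideanLin Mᵀ (yp - ys), xhat - xs⟫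
      + ξ ^ 2 * t ^ 2 * ‖f' z + Matrix.toEuclideanLin Mᵀ yp‖ ^ 2 := by
  have hP0 : (0:ℝ) < Pii := lt_trans one_pos hPii
  have hθ0 : (0:ℝ) < 1 - 1/Pii := by
    have : 1/Pii < 1 := by rw [div_lt_one hP0]; exact hPii
    linarith
  have hθ1 : (0:ℝ) < 1/Pii := by positivity
  have hτθ : τ * (1 - 1/Pii) = ξ - 1 := by
    rw [hτ, div_mul_cancel₀ _ (ne_of_gt hθ0)]
  have hτ0 : 0 ≤ τ := by
    rw [hτ]; exact div_nonneg (by linarith) (le_of_lt hθ0)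
  have hτ1 : (0:ℝ) < τ + 1 := by linarith
  have hγτ : γ * (τ + 1) = ξ - 1 := by
    rw [hγ]; field_simp
  have hμt : 1/Pii ≤ ξ * μ * t := by
    rw [div_le_iff₀ hP0]; nlinarith
  set T := Matrix.toEuclideanLin Mᵀ with hT
  have hys : T ys = -f' xs := eq_neg_of_add_eq_zero_right hsaddle
  set g : EuclideanSpace ℝ (Fin m) := f' z + T yp with hg
  -- vp = ξ • xp - (ξ-1) • x
  have hvp2 : vp = ξ • xp - (ξ - 1) • x := by
    rw [hvp, hzp]
    match_scalars
    · linear_combination hγτ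
    · linear_combination -hγτ
  have hkey : vp - xs = (xhat - xs) - (ξ * t) • g := by
    rw [hvp2, hxp, hxhat, hg]; module
  -- strong convexity bound
  have hDf : ∀ a b, μ/2 * ‖a - b‖^2 ≤ Df f f' a b := by
    intro a b
    have := hsc b a
    simp only [Df]
    linarith
  -- Bregman identities
  have hb1 : ⟪f' z - f' xs, z - xs⟫ = Df f f' z xs + Df f f' xs z := by
    simp only [Df, inner_sub_left, inner_sub_right]
    ring
  have hb2 : ⟪f' z - f' xs, x - xs⟫ = Df f f' x xs - Df f f' x z + Df f f' xs z := by
    simp only [Df, inner_sub_left, inner_sub_right]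
    ring
  -- E1: norm expansion
  have E1 : ‖vp - xs‖^2 = ‖xhat - xs‖^2 - 2*(ξ*t)*⟪g, xhat - xs⟫ + (ξ*t)^2 * ‖g‖^2 := by
    rw [hkey, norm_sub_sq_real, real_inner_smul_right, norm_smul, mul_pow,
      Real.norm_eq_abs, sq_abs, real_inner_comm]
    ring
  -- E2: split the gradient term
  have E2 : ⟪g, xhat - xs⟫ = ⟪T (yp - ys), xhat - xs⟫ + ⟪f' z - f' xs, xhat - xs⟫ := by
    rw [hg, map_sub, hys]
    simp only [inner_add_left, inner_sub_left, inner_neg_left]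
    ring
  -- E3
  have hxa : xhat - xs = ξ • (z - xs) - (ξ - 1) • (x - xs) := by rw [hxhat]; module
  have hva : v - xs = (1 + τ) • (z - xs) - τ • (x - xs) := by rw [hv]; module
  have E3 : ⟪f' z - f' xs, xhat - xs⟫
      = ξ * (Df f f' z xs + Df f f' xs z)
        - (ξ - 1) * (Df f f' x xs - Df f f' x z + Df f f' xs z) := by
    rw [hxa, inner_sub_right, real_inner_smul_right, real_inner_smul_right, hb1, hb2]
  -- E4: the quadratic inequality
  have E4 : ‖xhat - xs‖^2 ≤ (1 - 1/Pii) * ‖v - xs‖^2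
      + (ξ*μ*t) * ‖z - xs‖^2 + (ξ*(ξ-1)*μ*t) * ‖x - z‖^2 := by
    have hxz : (x : EuclideanSpace ℝ (Fin m)) - z
        = (1:ℝ) • (x - xs) - (1:ℝ) • (z - xs) := by module
    rw [hxa, hva, hxz, expand_sq, expand_sq, expand_sq,
      real_inner_comm (x - xs) (z - xs)]
    have hξ' : ξ = 1 + τ * (1 - 1/Pii) := by linarith [hτθ]
    have hq : (0:ℝ) ≤ ‖z - xs‖^2 - 2*⟪x - xs, z - xs⟫ + ‖x - xs‖^2 := by
      have h := expand_sq (m := m) 1 1 (x - xs) (z - xs)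
      nlinarith [h, sq_nonneg ‖(1:ℝ) • (x - xs) - (1:ℝ) • (z - xs)‖]
    have hAB : 1 - (1 - 1/Pii) ≤ (1 + τ*(1-1/Pii))*(μ*t) := by
      have e2 : (1 + τ*(1-1/Pii))*(μ*t) = ξ*(μ*t) := by rw [hξ']
      have e3 : ξ*(μ*t) = ξ*μ*t := by ring
      rw [e2, e3]
      have e4 : 1 - (1 - 1/Pii) = 1/Pii := by ring
      rw [e4]; exact hμt
    have Q := quad_ineq (1-1/Pii) τ (μ*t) ‖z - xs‖ ‖x - xs‖ ⟪x - xs, z - xs⟫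
      hθ0 (by linarith [hθ1]) hτ0 (by positivity) hAB hq
    rw [hξ']
    linarith [Q]
  -- put bounds on Df terms
  have hrev : ‖xs - z‖ = ‖z - xs‖ := norm_sub_rev _ _
  have hS3 : 2*ξ*t*(μ/2*‖z - xs‖^2) ≤ 2*ξ*t*(Df f f' xs z) := by
    have h := hDf xs z
    rw [hrev] at h
    have : (0:ℝ) ≤ 2*ξ*t := by positivity
    exact mul_le_mul_of_nonneg_left h this
  have hS4 : 2*(ξ*(ξ-1)*t)*(μ/2*‖x - z‖^2) ≤ 2*(ξ*(ξ-1)*t)*(Df f f' x z) := by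
    have h := hDf x z
    have : (0:ℝ) ≤ 2*(ξ*(ξ-1)*t) := by
      have : (0:ℝ) ≤ ξ - 1 := by linarith
      positivity
    exact mul_le_mul_of_nonneg_left h this
  have main : ‖xhat - xs‖^2 - 2*ξ*t*(Df f f' xs z) - 2*(ξ*(ξ-1)*t)*(Df f f' x z)
      ≤ (1 - 1/Pii) * ‖v - xs‖^2 := by linarith [E4, hS3, hS4]
  have Egoal : ‖vp - xs‖^2
      = ‖xhat - xs‖^2 - 2*ξ*t*⟪T (yp - ys), xhat - xs⟫
        - 2*ξ*t*(ξ * (Df f f' z xs + Df f f' xs z)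
          - (ξ - 1) * (Df f f' x xs - Df f f' x z + Df f f' xs z))
        + ξ^2*t^2*‖g‖^2 := by
    linear_combination E1 - (2*ξ*t)*E2 - (2*ξ*t)*E3
  rw [Egoal]
  have hgG : ‖f' z + Matrix.toEuclideanLin Mᵀ yp‖ = ‖g‖ := by rw [hg]
  rw [hgG]
  linarith [main]
end

section
/- Let φ : ℝ^n → ℝ ∪ {+∞} be proper, convex and lower semicontinuous, let M be a real n×m matrix with ‖Mᵀy‖ ≤ s_max‖y‖ for all y ∈ ℝ^n (so that MMᵀ ≼ s_max²·I), set ŝ = 1/s_max², and let χ > 0 and s > 0. Let b ∈ ℝ^n, x* ∈ ℝ^m and y* ∈ ℝ^n satisfy: g* := Mx* − b is a subgradient of φ at y*, i.e. φ(z') ≥ φ(y*) + ⟪g*, z' − y*⟫ for all z'. Let f : ℝ^m → ℝ be differentiable. Then for any y ∈ ℝ^n, z ∈ ℝ^m and x̂ ∈ ℝ^m, setting y⁺ = prox_{χsφ}(y + χs(Mx̂ − b) − ŝM(Mᵀy + ∇f(z))), one has, with G = I − ŝ·MMᵀ: ‖y⁺ − y*‖²_G ≤ ‖y − y*‖²_G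 + 2χs·⟪Mᵀ(y⁺ − y*), x̂ − x*⟫ − 2ŝ·⟪Mᵀ(y⁺ − y*), Mᵀy⁺ + ∇f(z)⟫. -/
open scoped RealInnerProductSpace
open Matrix

def IsProx {F : Type*} [NormedAddCommGroup F] [InnerProductSpace ℝ F]
    (c : ℝ) (φ : F → EReal) (w p : F) : Prop :=
  ∀ z : F, (c : EReal) * φ p + ((1 / 2 * ‖p - w‖ ^ 2 : ℝ) : EReal) ≤
    (c : EReal) * φ z + ((1 / 2 * ‖z - w‖ ^ 2 : ℝ) : EReal)

lemma prox_subgrad {F : Type*} [NormedAddCommGroup F] [InnerProductSpace ℝ F]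
    (c : ℝ) (hc : 0 < c) (φ : F → EReal)
    (hφconv : ∀ (y y' : F) (a d : ℝ), 0 ≤ a → 0 ≤ d → a + d = 1 →
      φ (a • y + d • y') ≤ (a : EReal) * φ y + (d : EReal) * φ y')
    (w p z' : F) (P Q : ℝ) (hP : φ p = (P : EReal)) (hQ : φ z' = (Q : EReal))
    (hprox : IsProx c φ w p) : c * (P - Q) ≤ ⟪p - w, z' - p⟫ := by
  have key : ∀ t : ℝ, 0 < t → t ≤ 1 →
      c * (P - Q) ≤ ⟪p - w, z' - p⟫ + t / 2 * ‖z' - p‖ ^ 2 := by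
    intro t ht ht1
    have hconv := hφconv p z' (1 - t) t (by linarith) ht.le (by ring)
    rw [hP, hQ] at hconv
    have hconv' : φ ((1 - t) • p + t • z') ≤ (((1 - t) * P + t * Q : ℝ) : EReal) := by
      refine hconv.trans_eq ?_
      rw [EReal.coe_add, EReal.coe_mul, EReal.coe_mul]
    have h1 := hprox ((1 - t) • p + t • z')
    rw [hP] at h1
    have h2 : (c : EReal) * φ ((1 - t) • p + t • z') ≤
        ((c * ((1 - t) * P + t * Q) : ℝ) : EReal) := by
      rw [EReal.coe_mul]
      exact mul_le_mul_of_nonneg_left hconv' (by exact_mod_cast hc.le)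
    have h3 : ((c * P + 1 / 2 * ‖p - w‖ ^ 2 : ℝ) : EReal) ≤
        ((c * ((1 - t) * P + t * Q) + 1 / 2 * ‖(1 - t) • p + t • z' - w‖ ^ 2 : ℝ) : EReal) := by
      rw [EReal.coe_add, EReal.coe_add, EReal.coe_mul]
      exact le_trans h1 (add_le_add_left h2 _)
    rw [EReal.coe_le_coe_iff] at h3
    have hexp : ‖(1 - t) • p + t • z' - w‖ ^ 2 =
        ‖p - w‖ ^ 2 + 2 * t * ⟪p - w, z' - p⟫ + t ^ 2 * ‖z' - p‖ ^ 2 := by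
      have : (1 - t) • p + t • z' - w = (p - w) + t • (z' - p) := by
        module
      rw [this]
      rw [norm_add_sq_real, real_inner_smul_right, norm_smul]
      simp [mul_pow, abs_of_nonneg ht.le]
      ring
    rw [hexp] at h3
    calc c * (P - Q) = c * (P - Q) * t * t⁻¹ := by field_simp
    _ ≤ (⟪p - w, z' - p⟫ + t / 2 * ‖z' - p‖ ^ 2) * t * t⁻¹ := by
        apply mul_le_mul_of_nonneg_right _ (le_of_lt (inv_pos.2 ht))
        nlinarith
    _ = ⟪p - w, z' - p⟫ + t / 2 * ‖z' - p‖ ^ 2 := by field_simp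
  by_contra hcon
  push_neg at hcon
  set K := ‖z' - p‖ ^ 2 with hK
  have hK0 : 0 ≤ K := by positivity
  set ε := c * (P - Q) - ⟪p - w, z' - p⟫ with hε
  have hε0 : 0 < ε := by linarith
  set t := min 1 (ε / (K + 1)) with ht
  have htpos : 0 < t := lt_min one_pos (by positivity)
  have ht1 : t ≤ 1 := min_le_left _ _
  have := key t htpos ht1
  have htK : t / 2 * K < ε := by
    have h1 : t ≤ ε / (K + 1) := min_le_right _ _
    have h2 : t / 2 * K ≤ ε / (K + 1) * K := by
      apply mul_le_mul_of_nonneg_right _ hK0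
      linarith
    calc t / 2 * K ≤ ε / (K + 1) * K := h2
    _ < ε := by
        rw [div_mul_eq_mul_div, div_lt_iff₀ (by positivity)]
        nlinarith
  linarith

set_option maxHeartbeats 1000000 in
theorem stmt7 (m n : ℕ)
    (φ : EuclideanSpace ℝ (Fin n) → EReal)
    (hφbot : ∀ y, φ y ≠ ⊥) (hφtop : ∃ y, φ y ≠ ⊤)
    (hφconv : ∀ (y y' : EuclideanSpace ℝ (Fin n)) (a c : ℝ), 0 ≤ a → 0 ≤ c → a + c = 1 →
      φ (a • y + c • y') ≤ (a : EReal) * φ y + (c : EReal) * φ y')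
    (hφlsc : LowerSemicontinuous φ)
    (M : Matrix (Fin n) (Fin m) ℝ) (s_max : ℝ) (hsmax : 0 < s_max)
    (hM : ∀ y : EuclideanSpace ℝ (Fin n), ‖Matrix.toEuclideanLin Mᵀ y‖ ≤ s_max * ‖y‖)
    (sh χ s : ℝ) (hsh : sh = 1 / s_max ^ 2) (hχ : 0 < χ) (hs : 0 < s)
    (b : EuclideanSpace ℝ (Fin n))
    (xs : EuclideanSpace ℝ (Fin m)) (ys gs : EuclideanSpace ℝ (Fin n))
    (hgs : gs = Matrix.toEuclideanLin M xs - b)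
    (hsub : ∀ z : EuclideanSpace ℝ (Fin n),
      φ ys + ((⟪gs, z - ys⟫ : ℝ) : EReal) ≤ φ z)
    (f : EuclideanSpace ℝ (Fin m) → ℝ)
    (f' : EuclideanSpace ℝ (Fin m) → EuclideanSpace ℝ (Fin m))
    (hdiff : ∀ x, HasGradientAt f (f' x) x)
    (y : EuclideanSpace ℝ (Fin n)) (z xhat : EuclideanSpace ℝ (Fin m))
    (yp : EuclideanSpace ℝ (Fin n))
    (hyp : IsProx (χ * s) φ
      (y + (χ * s) • (Matrix.toEuclideanLin M xhat - b)
        - sh • Matrix.toEuclideanLin M (Matrix.toEuclideanLin Mᵀ y + f' z)) yp)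
    (G : Matrix (Fin n) (Fin n) ℝ) (hG : G = 1 - sh • (M * Mᵀ)) :
    ⟪yp - ys, Matrix.toEuclideanLin G (yp - ys)⟫ ≤
      ⟪y - ys, Matrix.toEuclideanLin G (y - ys)⟫
      + 2 * (χ * s) * ⟪Matrix.toEuclideanLin Mᵀ (yp - ys), xhat - xs⟫
      - 2 * sh * ⟪Matrix.toEuclideanLin Mᵀ (yp - ys),
          Matrix.toEuclideanLin Mᵀ yp + f' z⟫ := by
  set A := Matrix.toEuclideanLin M with hA
  set T := Matrix.toEuclideanLin Mᵀ with hT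
  set c : ℝ := χ * s with hc
  have hcpos : 0 < c := mul_pos hχ hs
  set w : EuclideanSpace ℝ (Fin n) := y + c • (A xhat - b) - sh • A (T y + f' z) with hw
  -- adjoint
  have hadj : ∀ (x : EuclideanSpace ℝ (Fin m)) (v : EuclideanSpace ℝ (Fin n)),
      ⟪A x, v⟫ = ⟪x, T v⟫ := by
    intro x v
    rw [hA, hT, (Matrix.conjTranspose_eq_transpose_of_trivial M).symm,
      Matrix.toEuclideanLin_conjTranspose_eq_adjoint]
    exact (LinearMap.adjoint_inner_right _ _ _).symm
  have hadj2 : ∀ (x : EuclideanSpace ℝ (Fin m)) (v : EuclideanSpace ℝ (Fin n)),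
      ⟪v, A x⟫ = ⟪T v, x⟫ := by
    intro x v
    rw [real_inner_comm, hadj, real_inner_comm]
  -- G action
  have hGv : ∀ v : EuclideanSpace ℝ (Fin n),
      Matrix.toEuclideanLin G v = v - sh • A (T v) := by
    intro v
    subst hG
    simp [hA, hT, Matrix.toEuclideanLin_apply, Matrix.sub_mulVec, Matrix.smul_mulVec,
      Matrix.one_mulVec, Matrix.mulVec_mulVec]
  have hGn : ∀ v : EuclideanSpace ℝ (Fin n),
      ⟪v, Matrix.toEuclideanLin G v⟫ = ‖v‖ ^ 2 - sh * ‖T v‖ ^ 2 := by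
    intro v
    rw [hGv v, inner_sub_right, real_inner_smul_right, hadj2,
      real_inner_self_eq_norm_sq, real_inner_self_eq_norm_sq]
  -- finiteness of φ yp and φ ys
  obtain ⟨z0, hz0⟩ := hφtop
  have hz0' : φ z0 ≠ ⊥ := hφbot z0
  have hz0R : φ z0 = ((φ z0).toReal : EReal) := (EReal.coe_toReal hz0 hz0').symm
  have hyptop : φ yp ≠ ⊤ := by
    intro htop
    have h1 := hyp z0
    rw [htop] at h1
    have hc' : (0 : EReal) < (c : EReal) := by exact_mod_cast hcpos
    rw [EReal.mul_top_of_pos hc', EReal.top_add_coe, hz0R, ← EReal.coe_mul,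
      ← EReal.coe_add] at h1
    exact EReal.coe_ne_top _ (top_le_iff.mp h1)
  have hystop : φ ys ≠ ⊤ := by
    intro htop
    have h1 := hsub z0
    rw [htop, EReal.top_add_of_ne_bot (EReal.coe_ne_bot _)] at h1
    exact hz0 (top_le_iff.mp h1)
  set P : ℝ := (φ yp).toReal with hPdef
  set Q : ℝ := (φ ys).toReal with hQdef
  have hP : φ yp = (P : EReal) := (EReal.coe_toReal hyptop (hφbot yp)).symm
  have hQ : φ ys = (Q : EReal) := (EReal.coe_toReal hystop (hφbot ys)).symm
  -- prox inequality
  have hprox : c * (P - Q) ≤ ⟪yp - w, ys - yp⟫ :=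
    prox_subgrad c hcpos φ hφconv w yp ys P Q hP hQ hyp
  -- subgradient inequality
  have hsubr : Q + ⟪gs, yp - ys⟫ ≤ P := by
    have h1 := hsub yp
    rw [hP, hQ, ← EReal.coe_add, EReal.coe_le_coe_iff] at h1
    exact h1
  -- key inequality
  have hkey : c * ⟪gs, yp - ys⟫ ≤ ⟪yp - w, ys - yp⟫ := by
    have := mul_le_mul_of_nonneg_left (by linarith : ⟪gs, yp - ys⟫ ≤ P - Q) hcpos.le
    linarith
  set u : EuclideanSpace ℝ (Fin n) := yp - ys with hu
  set d : EuclideanSpace ℝ (Fin n) := yp - y with hd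
  -- F4
  have F4 : ⟪d, u⟫ - c * ⟪xhat - xs, T u⟫ + sh * ⟪T y + f' z, T u⟫ ≤ 0 := by
    have e1 : ⟪yp - w, ys - yp⟫ =
        -⟪d, u⟫ + c * ⟪A xhat - b, u⟫ - sh * ⟪A (T y + f' z), u⟫ := by
      have hyw : yp - w = d - c • (A xhat - b) + sh • A (T y + f' z) := by
        rw [hw, hd]; module
      rw [hyw]
      have hys : ys - yp = -u := by rw [hu]; module
      rw [hys, inner_neg_right, inner_add_left, inner_sub_left,
        real_inner_smul_left, real_inner_smul_left]
      ring
    rw [e1, hgs] at hkey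
    have e3 : ⟪A xhat - b, u⟫ - ⟪A xs - b, u⟫ = ⟪xhat - xs, T u⟫ := by
      simp only [inner_sub_left, hadj]
      ring
    have e3' : c * ⟪A xhat - b, u⟫ - c * ⟪A xs - b, u⟫ = c * ⟪xhat - xs, T u⟫ := by
      linear_combination c * e3
    have e4 : ⟪A (T y + f' z), u⟫ = ⟪T y + f' z, T u⟫ := hadj _ _
    have e4' : sh * ⟪A (T y + f' z), u⟫ = sh * ⟪T y + f' z, T u⟫ := by
      linear_combination sh * e4
    linarith [hkey, e3', e4']
  -- F5
  have F5 : sh * ‖T d‖ ^ 2 ≤ ‖d‖ ^ 2 := by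
    have h1 := hM d
    have h2 : ‖T d‖ ^ 2 ≤ s_max ^ 2 * ‖d‖ ^ 2 := by
      nlinarith [h1, norm_nonneg (T d), norm_nonneg d, hsmax]
    rw [hsh, div_mul_eq_mul_div, div_le_iff₀ (by positivity)]
    nlinarith [h2]
  -- norm identities
  have F1 : ‖u‖ ^ 2 = ‖y - ys‖ ^ 2 + 2 * ⟪d, u⟫ - ‖d‖ ^ 2 := by
    have h : y - ys = u - d := by rw [hu, hd]; module
    rw [h, norm_sub_sq_real u d]
    have := real_inner_comm u d
    linarith
  have F2 : ‖T u‖ ^ 2 = ‖T (y - ys)‖ ^ 2 + 2 * ⟪T d, T u⟫ - ‖T d‖ ^ 2 := by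
    have h : T (y - ys) = T u - T d := by
      rw [show y - ys = u - d by rw [hu, hd]; module, map_sub]
    rw [h, norm_sub_sq_real (T u) (T d)]
    have := real_inner_comm (T u) (T d)
    linarith
  have F3 : ⟪T u, Matrix.toEuclideanLin Mᵀ yp + f' z⟫ = ⟪T u, T y + f' z⟫ + ⟪T u, T d⟫ := by
    have h : Matrix.toEuclideanLin Mᵀ yp + f' z = (T y + f' z) + T d := by
      rw [hT, show yp = y + d by rw [hd]; module, map_add]
      module
    rw [h, inner_add_right]
  have F2' : sh * ‖T u‖ ^ 2 = sh * ‖T (y - ys)‖ ^ 2 + 2 * sh * ⟪T d, T u⟫ - sh * ‖T d‖ ^ 2 := by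
    linear_combination sh * F2
  rw [hGn, hGn, F3,
    show ⟪T u, xhat - xs⟫ = ⟪xhat - xs, T u⟫ from real_inner_comm _ _,
    show ⟪T u, T y + f' z⟫ = ⟪T y + f' z, T u⟫ from real_inner_comm _ _,
    show ⟪T u, T d⟫ = ⟪T d, T u⟫ from real_inner_comm _ _]
  linarith [F1, F2', F4, F5]
end

section
/- Let f : ℝ^m → ℝ be differentiable, μ-strongly convex and L-smooth (L ≥ μ > 0), let M be a real n×m matrix, and let (x*, y*) satisfy ∇f(x*) + Mᵀy* = 0. Let t = 1/(2L), let t̃ satisfy 0 < t̃ ≤ t, and let Π > 0 satisfy μ·t̃ ≥ 1/Π. Then for any x ∈ ℝ^m and any u⁺ ∈ ℝ^n, setting x⁺ = x − t̃·(∇f(x) + Mᵀu⁺), one has: ‖x⁺ − x*‖² − 2(t − t̃)·D_f(x⁺, x*) ≤ (1 − 1/Π)·(‖x − x*‖² − 2(t − t̃)·D_f(x, x*)) − 2t̃·⟪x − x* − t·(∇f(x) − ∇f(x*)), Mᵀ(u⁺ − y*)⟫ + t̃²·‖Mᵀ(u⁺ − y*)‖². -/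
open scoped RealInnerProductSpace
open Matrix

set_option maxHeartbeats 1000000 in
theorem stmt8 (m n : ℕ)
    (f : EuclideanSpace ℝ (Fin m) → ℝ)
    (f' : EuclideanSpace ℝ (Fin m) → EuclideanSpace ℝ (Fin m))
    (μ L : ℝ) (hμ : 0 < μ) (hμL : μ ≤ L)
    (hdiff : ∀ x, HasGradientAt f (f' x) x)
    (hsc : ∀ x x', f x + ⟪f' x, x' - x⟫ + μ / 2 * ‖x' - x‖ ^ 2 ≤ f x')
    (hsm : ∀ x x', f x' ≤ f x + ⟪f' x, x' - x⟫ + L / 2 * ‖x' - x‖ ^ 2)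
    (M : Matrix (Fin n) (Fin m) ℝ)
    (xs : EuclideanSpace ℝ (Fin m)) (ys : EuclideanSpace ℝ (Fin n))
    (hsaddle : f' xs + Matrix.toEuclideanLin Mᵀ ys = 0)
    (t ttil Pii : ℝ) (ht : t = 1 / (2 * L)) (httil : 0 < ttil) (httil' : ttil ≤ t)
    (hPii : 0 < Pii) (hμt : 1 / Pii ≤ μ * ttil)
    (x : EuclideanSpace ℝ (Fin m)) (up : EuclideanSpace ℝ (Fin n))
    (xp : EuclideanSpace ℝ (Fin m))
    (hxp : xp = x - ttil • (f' x + Matrix.toEuclideanLin Mᵀ up)) :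
    ‖xp - xs‖ ^ 2 - 2 * (t - ttil) * Df f f' xp xs ≤
      (1 - 1 / Pii) * (‖x - xs‖ ^ 2 - 2 * (t - ttil) * Df f f' x xs)
      - 2 * ttil * ⟪x - xs - t • (f' x - f' xs), Matrix.toEuclideanLin Mᵀ (up - ys)⟫
      + ttil ^ 2 * ‖Matrix.toEuclideanLin Mᵀ (up - ys)‖ ^ 2 := by
  have hL : (0:ℝ) < L := lt_of_lt_of_le hμ hμL
  have ht0 : 0 < t := by rw [ht]; positivity
  have hAys : Matrix.toEuclideanLin Mᵀ ys = - f' xs :=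
    eq_neg_of_add_eq_zero_right hsaddle
  have hxps : xp - xs =
      (x - xs) - ttil • ((f' x - f' xs) + Matrix.toEuclideanLin Mᵀ (up - ys)) := by
    rw [hxp, map_sub, hAys]
    module
  have hxpx : xp - x =
      - (ttil • ((f' x - f' xs) + Matrix.toEuclideanLin Mᵀ (up - ys))) := by
    rw [hxp, map_sub, hAys]
    module
  -- cocoercivity-ish: Df a b ≥ 1/(2L) ‖f' a - f' b‖²
  have key : ∀ a b, 1/(2*L) * ‖f' a - f' b‖^2 ≤ Df f f' a b := by
    intro a b
    have h1 := hsm a (a - (1/L) • (f' a - f' b))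
    have h2 := hsc b (a - (1/L) • (f' a - f' b))
    have e1 : (a - (1/L) • (f' a - f' b)) - a = -((1/L) • (f' a - f' b)) := by module
    have e2 : (a - (1/L) • (f' a - f' b)) - b = (a - b) - (1/L) • (f' a - f' b) := by
      module
    rw [e1] at h1
    rw [e2] at h2
    have n1 : ‖-((1/L) • (f' a - f' b))‖^2 = (1/L)^2 * ‖f' a - f' b‖^2 := by
      rw [norm_neg, norm_smul, mul_pow, Real.norm_eq_abs, sq_abs]
    have i1 : ⟪f' a, -((1/L) • (f' a - f' b))⟫ = -(1/L * ⟪f' a, f' a - f' b⟫) := by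
      rw [inner_neg_right, real_inner_smul_right]
    have i2 : ⟪f' b, (a - b) - (1/L) • (f' a - f' b)⟫
        = ⟪f' b, a - b⟫ - 1/L * ⟪f' b, f' a - f' b⟫ := by
      rw [inner_sub_right, real_inner_smul_right]
    rw [n1, i1] at h1
    rw [i2] at h2
    have hmu : 0 ≤ μ / 2 * ‖a - b - (1 / L) • (f' a - f' b)‖ ^ 2 := by positivity
    have hLL : L/2 * ((1/L)^2 * ‖f' a - f' b‖^2) = 1/(2*L) * ‖f' a - f' b‖^2 := by
      field_simp
    have hig : 1/L * ⟪f' a, f' a - f' b⟫ - 1/L * ⟪f' b, f' a - f' b⟫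
        = 1/L * ‖f' a - f' b‖^2 := by
      rw [← mul_sub, ← inner_sub_left, real_inner_self_eq_norm_sq]
    have h2L : 1/(2*L) * ‖f' a - f' b‖^2 + 1/(2*L) * ‖f' a - f' b‖^2
        = 1/L * ‖f' a - f' b‖^2 := by
      field_simp; ring
    simp only [Df]
    linarith [h1, h2, hmu, hLL, hig, h2L]
  -- Df x xs ≥ t ‖d‖², Df xs x ≥ t ‖d‖²
  have k1 : t * ‖f' x - f' xs‖^2 ≤ Df f f' x xs := by
    have := key x xs; rw [ht]; linarith
  have k2 : t * ‖f' x - f' xs‖^2 ≤ Df f f' xs x := by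
    have h := key xs x
    rw [norm_sub_rev] at h
    rw [ht]; linarith
  -- sum identity: Df x xs + Df xs x = ⟪d, x - xs⟫
  have ksum : Df f f' x xs + Df f f' xs x = ⟪f' x - f' xs, x - xs⟫ := by
    simp only [Df]
    rw [show xs - x = -(x - xs) from by module, inner_neg_right, inner_sub_left]
    ring
  have hde2t : 2 * t * ‖f' x - f' xs‖^2 ≤ ⟪f' x - f' xs, x - xs⟫ := by linarith
  -- strong monotonicity: ⟪d, x - xs⟫ ≥ μ ‖x - xs‖²
  have hmono : μ * ‖x - xs‖^2 ≤ ⟪f' x - f' xs, x - xs⟫ := by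
    have h1 := hsc x xs
    have h2 := hsc xs x
    rw [show xs - x = -(x - xs) from by module, inner_neg_right, norm_neg] at h1
    rw [inner_sub_left]
    linarith
  -- Df x xs ≥ 0
  have hB0 : 0 ≤ Df f f' x xs := by
    have h2 := hsc xs x
    have hpos : 0 ≤ μ / 2 * ‖x - xs‖ ^ 2 := by positivity
    simp only [Df]
    linarith
  -- convexity: Df xp xs ≥ Df x xs + ⟪d, xp - x⟫
  have hconv : Df f f' x xs + ⟪f' x - f' xs, xp - x⟫ ≤ Df f f' xp xs := by
    have h1 := hsc x xp
    have hsplit : ⟪f' xs, xp - xs⟫ = ⟪f' xs, xp - x⟫ + ⟪f' xs, x - xs⟫ := by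
      rw [← inner_add_right]; congr 1; module
    have hdsplit : ⟪f' x - f' xs, xp - x⟫ = ⟪f' x, xp - x⟫ - ⟪f' xs, xp - x⟫ :=
      inner_sub_left _ _ _
    have hmupos : 0 ≤ μ / 2 * ‖xp - x‖ ^ 2 := by positivity
    simp only [Df]
    rw [hsplit, hdsplit]
    linarith
  have hdxpx : ⟪f' x - f' xs, xp - x⟫
      = -(ttil * (‖f' x - f' xs‖^2 + ⟪f' x - f' xs, Matrix.toEuclideanLin Mᵀ (up - ys)⟫)) := by
    rw [hxpx, inner_neg_right, real_inner_smul_right, inner_add_right,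
      real_inner_self_eq_norm_sq]
  have hconv2 : Df f f' x xs
      - ttil * (‖f' x - f' xs‖^2 + ⟪f' x - f' xs, Matrix.toEuclideanLin Mᵀ (up - ys)⟫)
      ≤ Df f f' xp xs := by
    rw [hdxpx] at hconv; linarith
  have h2conv := mul_le_mul_of_nonneg_left hconv2
    (show (0:ℝ) ≤ 2*(t - ttil) by linarith)
  have hPE : 1/Pii * ‖x - xs‖^2 ≤ ttil * ⟪f' x - f' xs, x - xs⟫ := by
    nlinarith [hmono, hμt, sq_nonneg ‖x - xs‖, httil.le]
  have hprod4 := mul_le_mul_of_nonneg_left hde2t httil.le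
  have hPB : 0 ≤ 1/Pii * ((t - ttil) * Df f f' x xs) :=
    mul_nonneg (by positivity) (mul_nonneg (by linarith) hB0)
  have hq : 0 ≤ ttil^2 * ‖f' x - f' xs‖^2 := by positivity
  rw [show xp - xs = x - xs - ttil • (f' x - f' xs + Matrix.toEuclideanLin Mᵀ (up - ys)) from hxps]
  simp only [← real_inner_self_eq_norm_sq, inner_sub_left, inner_sub_right, inner_add_left,
    inner_add_right, real_inner_smul_left, real_inner_smul_right, real_inner_comm]
    at h2conv hPE hprod4 hPB hq ⊢
  linarith [h2conv, hPE, hprod4, hPB, hq]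
end

section
/- Let f : ℝ^m → ℝ be differentiable, let M be a real n×m matrix with ‖Mᵀv‖ ≤ s_max‖v‖ for all v ∈ ℝ^n, let φ : ℝ^n → ℝ ∪ {+∞} be proper, convex and lower semicontinuous, let s > 0 and ŝ > 0, and let b ∈ ℝ^n. Let (x*, y*) satisfy ∇f(x*) + Mᵀy* = 0, and set g* = Mx* − b. Given w ∈ ℝ^n and x ∈ ℝ^m, let p = w + s(Mx − b) − ŝM(Mᵀw + ∇f(x)), y⁺ = prox_{sφ}(p), and g⁺ = (p − y⁺)/s. Then, with H(v) := (1/2)·‖Mᵀ(v − y*)‖²: H(y⁺) ≤ H(w) − (1/ŝ − s_max²/2)·‖y⁺ − w‖² + ⟪(s/ŝ)·M(x − x*) − M(∇f(x) − ∇f(x*)) − (s/ŝ)·(g⁺ − g*), y⁺ − w⟫. -/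
open scoped RealInnerProductSpace
open Matrix

lemma adj_aux {m n : ℕ} (M : Matrix (Fin n) (Fin m) ℝ)
    (u : EuclideanSpace ℝ (Fin m)) (v : EuclideanSpace ℝ (Fin n)) :
    ⟪Matrix.toEuclideanLin M u, v⟫ = ⟪u, Matrix.toEuclideanLin Mᵀ v⟫ := by
  have h : Matrix.toEuclideanLin Mᵀ = LinearMap.adjoint (Matrix.toEuclideanLin M) := by
    rw [← Matrix.toEuclideanLin_conjTranspose_eq_adjoint,
      Matrix.conjTranspose_eq_transpose_of_trivial]
  rw [h, LinearMap.adjoint_inner_right]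

theorem stmt9 (m n : ℕ)
    (f : EuclideanSpace ℝ (Fin m) → ℝ)
    (f' : EuclideanSpace ℝ (Fin m) → EuclideanSpace ℝ (Fin m))
    (hdiff : ∀ x, HasGradientAt f (f' x) x)
    (M : Matrix (Fin n) (Fin m) ℝ) (s_max : ℝ)
    (hM : ∀ v : EuclideanSpace ℝ (Fin n), ‖Matrix.toEuclideanLin Mᵀ v‖ ≤ s_max * ‖v‖)
    (φ : EuclideanSpace ℝ (Fin n) → EReal)
    (hφbot : ∀ y, φ y ≠ ⊥) (hφtop : ∃ y, φ y ≠ ⊤)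
    (hφconv : ∀ (y y' : EuclideanSpace ℝ (Fin n)) (a c : ℝ), 0 ≤ a → 0 ≤ c → a + c = 1 →
      φ (a • y + c • y') ≤ (a : EReal) * φ y + (c : EReal) * φ y')
    (hφlsc : LowerSemicontinuous φ)
    (s sh : ℝ) (hs : 0 < s) (hsh : 0 < sh)
    (b : EuclideanSpace ℝ (Fin n))
    (xs : EuclideanSpace ℝ (Fin m)) (ys : EuclideanSpace ℝ (Fin n))
    (hsaddle : f' xs + Matrix.toEuclideanLin Mᵀ ys = 0)
    (gs : EuclideanSpace ℝ (Fin n)) (hgs : gs = Matrix.toEuclideanLin M xs - b)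
    (w : EuclideanSpace ℝ (Fin n)) (x : EuclideanSpace ℝ (Fin m))
    (p yp gp : EuclideanSpace ℝ (Fin n))
    (hp : p = w + s • (Matrix.toEuclideanLin M x - b)
      - sh • Matrix.toEuclideanLin M (Matrix.toEuclideanLin Mᵀ w + f' x))
    (hyp : IsProx s φ p yp)
    (hgp : gp = (1 / s) • (p - yp))
    (H : EuclideanSpace ℝ (Fin n) → ℝ)
    (hH : ∀ v, H v = 1 / 2 * ‖Matrix.toEuclideanLin Mᵀ (v - ys)‖ ^ 2) :
    H yp ≤ H w - (1 / sh - s_max ^ 2 / 2) * ‖yp - w‖ ^ 2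
      + ⟪(s / sh) • Matrix.toEuclideanLin M (x - xs)
          - Matrix.toEuclideanLin M (f' x - f' xs)
          - (s / sh) • (gp - gs), yp - w⟫ := by
  set L := Matrix.toEuclideanLin M with hL
  set T := Matrix.toEuclideanLin Mᵀ with hT
  set u : EuclideanSpace ℝ (Fin n) :=
    (s / sh) • L (x - xs) - L (f' x - f' xs) - (s / sh) • (gp - gs) with hu
  -- key identity: L (T (w - ys)) = u - (1/sh) • (yp - w)
  have hys : T ys = -(f' xs) := by
    rw [eq_neg_iff_add_eq_zero, add_comm]; exact hsaddle
  have hyp_eq : yp = p - s • gp := by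
    rw [hgp, smul_smul, mul_one_div, div_self (ne_of_gt hs), one_smul]; abel
  have key : L (T (w - ys)) = u - (1/sh) • (yp - w) := by
    have hsh' : sh ≠ 0 := ne_of_gt hsh
    rw [hu, hyp_eq, hp, hgs]
    simp only [map_sub, map_add, _root_.map_smul, hys, map_neg]
    match_scalars <;> field_simp <;> ring
  have hadj := adj_aux M
  -- expand H
  have hexp : H yp = H w + ⟪T (w - ys), T (yp - w)⟫ + 1/2 * ‖T (yp - w)‖ ^ 2 := by
    have : yp - ys = (w - ys) + (yp - w) := by abel
    rw [hH, hH, this, map_add]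
    rw [@norm_add_sq_real]
    ring
  have hinner : ⟪T (w - ys), T (yp - w)⟫ = ⟪u, yp - w⟫ - (1/sh) * ‖yp - w‖ ^ 2 := by
    have := hadj (T (w - ys)) (yp - w)
    rw [← this, key, inner_sub_left, real_inner_smul_left, real_inner_self_eq_norm_sq]
  have hnorm : 1/2 * ‖T (yp - w)‖ ^ 2 ≤ s_max ^ 2 / 2 * ‖yp - w‖ ^ 2 := by
    have h1 : ‖T (yp - w)‖ ^ 2 ≤ (s_max * ‖yp - w‖) ^ 2 :=
      pow_le_pow_left₀ (norm_nonneg _) (hM _) 2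
    nlinarith [h1]
  rw [hexp, hinner]
  linarith [hnorm]
end

section
/- Let f : ℝ^m → ℝ be differentiable, μ-strongly convex and L-smooth (L ≥ μ > 0), let M be a real n×m matrix with ‖Mᵀy‖ ≥ s_min‖y‖ for all y ∈ ℝ^n, where s_min > 0, and let b ∈ ℝ^n. Define F(x,y) = f(x) + ⟪y, Mx − b⟫, Φ_x(x) = sup_{y∈ℝ^n} F(x,y) (valued in ℝ ∪ {+∞}) and Φ_y(y) = inf_{x∈ℝ^m} F(x,y) (real-valued). Let (x*, y*) be the saddle point, i.e. ∇f(x*) + Mᵀy* = 0 and Mx* = b. Then for every x ∈ ℝ^m and every y ∈ ℝ^n: Φ_x(x) − Φ_y(y) ≥ (s_min²/(2L))·‖y − y*‖², where the inequality is interpreted in ℝ ∪ {+∞}. -/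
open scoped RealInnerProductSpace
open Matrix
set_option maxHeartbeats 1000000

theorem stmt10 (m n : ℕ)
    (f : EuclideanSpace ℝ (Fin m) → ℝ)
    (f' : EuclideanSpace ℝ (Fin m) → EuclideanSpace ℝ (Fin m))
    (μ L : ℝ) (hμ : 0 < μ) (hμL : μ ≤ L)
    (hdiff : ∀ x, HasGradientAt f (f' x) x)
    (hsc : ∀ x x', f x + ⟪f' x, x' - x⟫ + μ / 2 * ‖x' - x‖ ^ 2 ≤ f x')
    (hsm : ∀ x x', f x' ≤ f x + ⟪f' x, x' - x⟫ + L / 2 * ‖x' - x‖ ^ 2)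
    (M : Matrix (Fin n) (Fin m) ℝ)
    (s_min : ℝ) (hsmin : 0 < s_min)
    (hM : ∀ y : EuclideanSpace ℝ (Fin n), s_min * ‖y‖ ≤ ‖Matrix.toEuclideanLin Mᵀ y‖)
    (b : EuclideanSpace ℝ (Fin n))
    (F : EuclideanSpace ℝ (Fin m) → EuclideanSpace ℝ (Fin n) → ℝ)
    (hF : ∀ x y, F x y = f x + ⟪y, Matrix.toEuclideanLin M x - b⟫)
    (Φx : EuclideanSpace ℝ (Fin m) → EReal)
    (hΦx : ∀ x, Φx x = ⨆ y, ((F x y : ℝ) : EReal))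
    (Φy : EuclideanSpace ℝ (Fin n) → ℝ)
    (hΦy : ∀ y, Φy y = ⨅ x, F x y)
    (xs : EuclideanSpace ℝ (Fin m)) (ys : EuclideanSpace ℝ (Fin n))
    (hsaddle1 : f' xs + Matrix.toEuclideanLin Mᵀ ys = 0)
    (hsaddle2 : Matrix.toEuclideanLin M xs = b) :
    ∀ (x : EuclideanSpace ℝ (Fin m)) (y : EuclideanSpace ℝ (Fin n)),
      ((s_min ^ 2 / (2 * L) * ‖y - ys‖ ^ 2 : ℝ) : EReal) ≤ Φx x - ((Φy y : ℝ) : EReal) := by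
  intro x y
  have hL : (0:ℝ) < L := lt_of_lt_of_le hμ hμL
  set T := Matrix.toEuclideanLin M with hT
  set Tt := Matrix.toEuclideanLin Mᵀ with hTt
  have hadj : ∀ (v : EuclideanSpace ℝ (Fin n)) (u : EuclideanSpace ℝ (Fin m)),
      ⟪Tt v, u⟫ = ⟪v, T u⟫ := by
    intro v u
    have : Tt = LinearMap.adjoint T := by
      rw [hTt, hT, ← Matrix.toEuclideanLin_conjTranspose_eq_adjoint]
      congr 1
    rw [this, LinearMap.adjoint_inner_left]
  have hfxs : f' xs = -(Tt ys) := by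
    have := hsaddle1
    rw [add_eq_zero_iff_eq_neg] at this
    exact this
  -- Step A : f xs ≤ F x ys
  have stepA : f xs ≤ F x ys := by
    have h1 := hsc xs x
    have h2 : ⟪f' xs, x - xs⟫ = -⟪ys, T x - b⟫ := by
      rw [hfxs, inner_neg_left, hadj, map_sub, hsaddle2]
    have h3 : (0:ℝ) ≤ μ / 2 * ‖x - xs‖ ^ 2 := by positivity
    rw [hF]
    nlinarith [h1]
  -- bounded below
  set g : EuclideanSpace ℝ (Fin m) := Tt (y - ys) with hg
  have hlin : ∀ z : EuclideanSpace ℝ (Fin m),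
      F z y = f z + ⟪g, z - xs⟫ - ⟪f' xs, z - xs⟫ := by
    intro z
    rw [hF, hg, hfxs]
    have : ⟪y, T z - b⟫ = ⟪Tt y, z - xs⟫ := by
      rw [hadj, map_sub, hsaddle2]
    rw [this, map_sub, inner_sub_left, inner_neg_left]
    ring
  have hbdd : BddBelow (Set.range fun z => F z y) := by
    refine ⟨f xs - ‖g‖ ^ 2 / (2 * μ), ?_⟩
    rintro _ ⟨z, rfl⟩
    show f xs - ‖g‖ ^ 2 / (2 * μ) ≤ F z y
    rw [hlin z]
    have h1 := hsc xs z
    have h3' : |⟪g, z - xs⟫| ≤ ‖g‖ * ‖z - xs‖ := abs_real_inner_le_norm g (z - xs)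
    have h3'' : -(‖g‖ * ‖z - xs‖) ≤ ⟪g, z - xs⟫ := neg_le_of_abs_le h3'
    set a : ℝ := ⟪g, z - xs⟫
    set t : ℝ := ‖z - xs‖ with hts
    set c : ℝ := ‖g‖
    have hnum : (0:ℝ) ≤ μ^2*t^2 + 2*μ*a + c^2 := by
      nlinarith [sq_nonneg (μ*t - c), mul_nonneg hμ.le (show (0:ℝ) ≤ a + c*t by linarith)]
    have hkey : -(c^2 / (2 * μ)) ≤ μ / 2 * t^2 + a := by
      rw [← sub_nonneg]
      have heq : μ / 2 * t ^ 2 + a - -(c ^ 2 / (2 * μ)) = (μ^2*t^2 + 2*μ*a + c^2) / (2*μ) := by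
        field_simp; ring
      rw [heq]
      positivity
    linarith [h1, hkey]
  -- Step B : Φy y ≤ f xs - s_min^2/(2L) ‖y - ys‖^2
  have stepB : Φy y ≤ f xs - s_min ^ 2 / (2 * L) * ‖y - ys‖ ^ 2 := by
    set xh : EuclideanSpace ℝ (Fin m) := xs + (-(1/L)) • g with hxh
    have hle : Φy y ≤ F xh y := by
      rw [hΦy]; exact ciInf_le hbdd xh
    have hxhd : xh - xs = (-(1/L)) • g := by rw [hxh]; abel
    have hsm' := hsm xs xh
    have hFval : F xh y = f xh + ⟪g, xh - xs⟫ - ⟪f' xs, xh - xs⟫ := hlin xh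
    have hig : ⟪g, xh - xs⟫ = -(1/L) * ‖g‖^2 := by
      rw [hxhd, real_inner_smul_right, real_inner_self_eq_norm_sq]
    have hnd : ‖xh - xs‖^2 = (1/L)^2 * ‖g‖^2 := by
      rw [hxhd, norm_smul]
      simp [mul_pow]
    have hgs : s_min * ‖y - ys‖ ≤ ‖g‖ := hM (y - ys)
    have hgs2 : s_min^2 * ‖y - ys‖^2 ≤ ‖g‖^2 := by
      have h := mul_self_le_mul_self (by positivity) hgs
      nlinarith [h]
    have : F xh y ≤ f xs - 1/(2*L) * ‖g‖^2 := by
      have h5 : f xh ≤ f xs + ⟪f' xs, xh - xs⟫ + L/2 * ‖xh - xs‖^2 := hsm'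
      rw [hFval, hig]
      have key : L/2 * ((1/L)^2 * ‖g‖^2) - (1/L) * ‖g‖^2 = -(1/(2*L)) * ‖g‖^2 := by
        field_simp; ring
      nlinarith [h5, hnd, key]
    calc Φy y ≤ F xh y := hle
      _ ≤ f xs - 1/(2*L) * ‖g‖^2 := this
      _ ≤ f xs - s_min ^ 2 / (2 * L) * ‖y - ys‖ ^ 2 := by
          have : s_min ^ 2 / (2 * L) * ‖y - ys‖ ^ 2 ≤ 1/(2*L) * ‖g‖^2 := by
            rw [div_mul_eq_mul_div, div_le_iff₀ (by positivity)]
            have h2L : (0:ℝ) < 2*L := by positivity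
            calc s_min ^ 2 * ‖y - ys‖ ^ 2 ≤ ‖g‖^2 := hgs2
              _ = 1/(2*L) * ‖g‖^2 * (2*L) := by field_simp
          linarith
  -- Step C : combine in EReal
  have hreal : s_min ^ 2 / (2 * L) * ‖y - ys‖ ^ 2 ≤ F x ys - Φy y := by linarith
  have h1 : ((s_min ^ 2 / (2 * L) * ‖y - ys‖ ^ 2 : ℝ) : EReal)
      ≤ ((F x ys : ℝ) : EReal) - ((Φy y : ℝ) : EReal) := by
    rw [← EReal.coe_sub]
    exact_mod_cast hreal
  have h2 : ((F x ys : ℝ) : EReal) ≤ Φx x := by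
    rw [hΦx]
    exact le_iSup (fun y' => ((F x y' : ℝ) : EReal)) ys
  exact h1.trans (EReal.sub_le_sub h2 le_rfl)
end

section
/- For n ≥ 1, let A be the n×n real matrix with entries A_{ij} = 1 if i + j = n + 1, A_{ij} = −1 if i + j = n + 2, and A_{ij} = 0 otherwise (1-based indexing). Then: (1) A is nonsingular; (2) A is symmetric, i.e. Aᵀ = A; (3) ‖Av‖ ≤ 2‖v‖ for every v ∈ ℝ^n (operator 2-norm of A is at most 2); (4) (zero-chain property) for every 1 ≤ k ≤ n − 1 and every v ∈ ℝ^n with v_j = 0 for all j > k, the vector A²v satisfies (A²v)_j = 0 for all j > k + 1. -/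
open Matrix

/-- Proposition: properties of the lower-bound certificate matrix `A`
(1-based entries: `A_{IJ} = 1` if `I+J = n+1`, `A_{IJ} = -1` if `I+J = n+2`, else `0`). -/
theorem stmt11 (n : ℕ) (hn : 1 ≤ n)
    (A : Matrix (Fin n) (Fin n) ℝ)
    (hA : ∀ i j : Fin n, A i j =
      if (i : ℕ) + 1 + ((j : ℕ) + 1) = n + 1 then 1
      else if (i : ℕ) + 1 + ((j : ℕ) + 1) = n + 2 then -1
      else 0) :
    -- (1) A is nonsingular
    IsUnit A ∧
    -- (2) A is symmetric
    Aᵀ = A ∧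
    -- (3) the operator 2-norm of A is at most 2
    (∀ v : EuclideanSpace ℝ (Fin n), ‖Matrix.toEuclideanLin A v‖ ≤ 2 * ‖v‖) ∧
    -- (4) zero-chain property of A²
    (∀ k : ℕ, 1 ≤ k → k ≤ n - 1 → ∀ v : Fin n → ℝ,
      (∀ j : Fin n, k < (j : ℕ) + 1 → v j = 0) →
      ∀ j : Fin n, k + 1 < (j : ℕ) + 1 → (A * A).mulVec v j = 0) := by
  haveI : NeZero n := ⟨by omega⟩
  -- key formula for A.mulVec
  have key : ∀ (w : Fin n → ℝ) (i : Fin n),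
      A.mulVec w i = w i.rev - (if (i:ℕ) = 0 then 0 else w (-i)) := by
    intro w i
    have hrev : (i.rev : ℕ) = n - 1 - i := by rw [Fin.val_rev]; omega
    have hi' := i.isLt
    by_cases hi : (i:ℕ) = 0
    · have h1 : ∀ j : Fin n, A i j * w j = if i.rev = j then w j else 0 := by
        intro j
        have hj := j.isLt
        rw [hA]
        simp only [Fin.ext_iff, hrev]
        split_ifs <;> first | omega | ring
      have hmv : A.mulVec w i = ∑ j, A i j * w j := by
        simp [Matrix.mulVec, dotProduct]
      rw [hmv, Finset.sum_congr rfl fun j _ => h1 j, Finset.sum_ite_eq]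
      simp [hi]
    · have hneg : ((-i : Fin n) : ℕ) = n - i := by
        rw [Fin.coe_neg, Nat.mod_eq_of_lt (by omega)]
      have h1 : ∀ j : Fin n, A i j * w j =
          (if i.rev = j then w j else 0) - (if (-i : Fin n) = j then w j else 0) := by
        intro j
        have hj := j.isLt
        rw [hA]
        simp only [Fin.ext_iff, hrev, hneg]
        split_ifs <;> first | omega | ring
      have hmv : A.mulVec w i = ∑ j, A i j * w j := by
        simp [Matrix.mulVec, dotProduct]
      rw [hmv, Finset.sum_congr rfl fun j _ => h1 j, Finset.sum_sub_distrib,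
        Finset.sum_ite_eq, Finset.sum_ite_eq]
      simp [hi]
  refine ⟨?_, ?_, ?_, ?_⟩
  · -- (1) nonsingular: explicit inverse B i j = [i+j ≤ n-1]
    set B : Matrix (Fin n) (Fin n) ℝ :=
      Matrix.of (fun i j : Fin n => if (i:ℕ) + (j:ℕ) ≤ n - 1 then (1:ℝ) else 0) with hB
    have hAB : A * B = 1 := by
      ext i k
      have hik : (A * B) i k = A.mulVec (fun j => B j k) i := by
        simp [Matrix.mul_apply, Matrix.mulVec, dotProduct]
      rw [hik, key]
      have hrev : (i.rev : ℕ) = n - 1 - i := by rw [Fin.val_rev]; omega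
      have hi' := i.isLt
      have hk' := k.isLt
      by_cases hi : (i:ℕ) = 0
      · rw [if_pos hi]
        simp only [hB, Matrix.of_apply, Matrix.one_apply, Fin.ext_iff, hrev]
        split_ifs <;> first | omega | norm_num
      · have hneg : ((-i : Fin n) : ℕ) = n - i := by
          rw [Fin.coe_neg, Nat.mod_eq_of_lt (by omega)]
        rw [if_neg hi]
        simp only [hB, Matrix.of_apply, Matrix.one_apply, Fin.ext_iff, hrev, hneg]
        split_ifs <;> first | omega | norm_num
    exact ⟨⟨A, B, hAB, mul_eq_one_comm.mp hAB⟩, rfl⟩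
  · -- (2) symmetric
    ext i j
    rw [Matrix.transpose_apply, hA, hA]
    exact if_congr (by omega) rfl (if_congr (by omega) rfl rfl)
  · -- (3) norm bound
    intro v
    set w : Fin n → ℝ := (WithLp.equiv 2 (Fin n → ℝ)) v with hw
    have hAv : Matrix.toEuclideanLin A v = (WithLp.equiv 2 (Fin n → ℝ)).symm (A.mulVec w) :=
      rfl
    have hb : ∀ i : Fin n,
        (A.mulVec w i)^2 ≤ 2*(w i.rev)^2 + 2*(if (i:ℕ)=0 then 0 else w (-i))^2 := by
      intro i
      rw [key]
      nlinarith [sq_nonneg (w i.rev + (if (i:ℕ)=0 then 0 else w (-i)))]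
    have hsum1 : ∑ i : Fin n, (w i.rev)^2 = ∑ i : Fin n, (w i)^2 := by
      apply Fintype.sum_equiv Fin.revPerm (fun i : Fin n => (w i.rev)^2) (fun i : Fin n => (w i)^2)
      intro i
      simp
    have hsum2 : ∑ i : Fin n, (if (i:ℕ)=0 then (0:ℝ) else w (-i))^2 ≤ ∑ i : Fin n, (w i)^2 := by
      calc ∑ i : Fin n, (if (i:ℕ)=0 then (0:ℝ) else w (-i))^2
          ≤ ∑ i : Fin n, (w (-i))^2 := by
            apply Finset.sum_le_sum
            intro i _
            split_ifs
            · simpa using sq_nonneg (w (-i))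
            · exact le_rfl
        _ = ∑ i : Fin n, (w i)^2 := by
            apply Fintype.sum_equiv (Equiv.neg (Fin n)) (fun i : Fin n => (w (-i))^2) (fun i : Fin n => (w i)^2)
            intro i
            simp
    have hsq : (∑ i : Fin n, (A.mulVec w i)^2) ≤ 4 * ∑ i : Fin n, (w i)^2 := by
      calc (∑ i : Fin n, (A.mulVec w i)^2)
          ≤ ∑ i : Fin n, (2*(w i.rev)^2 + 2*(if (i:ℕ)=0 then (0:ℝ) else w (-i))^2) :=
            Finset.sum_le_sum fun i _ => hb i
        _ = 2 * (∑ i : Fin n, (w i.rev)^2) + 2 * ∑ i : Fin n, (if (i:ℕ)=0 then (0:ℝ) else w (-i))^2 := by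
            rw [Finset.sum_add_distrib, Finset.mul_sum, Finset.mul_sum]
        _ ≤ 4 * ∑ i : Fin n, (w i)^2 := by rw [hsum1]; linarith
    have hnorm1 : ‖Matrix.toEuclideanLin A v‖ = Real.sqrt (∑ i : Fin n, (A.mulVec w i)^2) := by
      rw [hAv, EuclideanSpace.norm_eq]
      congr 1
      refine Finset.sum_congr rfl fun i _ => ?_
      rw [show ((WithLp.equiv 2 (Fin n → ℝ)).symm (A.mulVec w)) i = A.mulVec w i from rfl,
        Real.norm_eq_abs, sq_abs]
    have hnorm2 : ‖v‖ = Real.sqrt (∑ i : Fin n, (w i)^2) := by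
      rw [EuclideanSpace.norm_eq]
      congr 1
      refine Finset.sum_congr rfl fun i _ => ?_
      rw [Real.norm_eq_abs, sq_abs]
      rfl
    rw [hnorm1, hnorm2]
    have h4 : (4:ℝ) * ∑ i : Fin n, (w i)^2 = (2 * Real.sqrt (∑ i : Fin n, (w i)^2))^2 := by
      rw [mul_pow, Real.sq_sqrt (by positivity)]
      ring
    calc Real.sqrt (∑ i : Fin n, (A.mulVec w i)^2)
        ≤ Real.sqrt (4 * ∑ i : Fin n, (w i)^2) := Real.sqrt_le_sqrt hsq
      _ = 2 * Real.sqrt (∑ i : Fin n, (w i)^2) := by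
          rw [h4, Real.sqrt_sq (by positivity)]
  · -- (4) zero-chain property
    intro k hk1 hk2 v hv j hj
    rw [← Matrix.mulVec_mulVec]
    set u := A.mulVec v with hu'
    have hu : ∀ i : Fin n, (i:ℕ) + k ≤ n - 1 → u i = 0 := by
      intro i hik
      have hi' := i.isLt
      rw [hu', key]
      have h1 : v i.rev = 0 := hv _ (by rw [Fin.val_rev]; omega)
      by_cases h : (i:ℕ) = 0
      · simp [h, h1]
      · have h2 : v (-i) = 0 :=
          hv _ (by rw [Fin.coe_neg, Nat.mod_eq_of_lt (by omega)]; omega)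
        simp [h, h1, h2]
    have hj' := j.isLt
    rw [key]
    rw [hu j.rev (by rw [Fin.val_rev]; omega), if_neg (by omega),
      hu (-j) (by rw [Fin.coe_neg, Nat.mod_eq_of_lt (by omega)]; omega)]
    ring
end

section
/- Let 0 < s_min and s_max ≥ √5·s_min, and set ŝ = √(s_max² − s_min²)/2. Let A be the n×n matrix with A_{ij} = 1 if i + j = n + 1, A_{ij} = −1 if i + j = n + 2, and A_{ij} = 0 otherwise. Let M = (−s_min·I ŝ·A) be the n×2n block matrix whose first n columns are −s_min times the identity and whose last n columns are ŝ·A. Then: ‖Mx‖ ≤ s_max·‖x‖ for every x ∈ ℝ^{2n}, and ‖Mᵀy‖ > s_min·‖y‖ for every nonzero y ∈ ℝ^n. Equivalently, the largest singular value of M is at most s_max and its smallest singular value is strictly greater than s_min. -/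
open Matrix Finset

/-- The mulVec of the hard-instance matrix, in terms of the natural extension of `v`. -/
lemma stmt12_mulVecA (n : ℕ) (A : Matrix (Fin n) (Fin n) ℝ)
    (hA : ∀ i j : Fin n, A i j =
      if (i : ℕ) + 1 + ((j : ℕ) + 1) = n + 1 then 1
      else if (i : ℕ) + 1 + ((j : ℕ) + 1) = n + 2 then -1
      else 0)
    (v : Fin n → ℝ) (V : ℕ → ℝ)
    (hV : ∀ m : ℕ, V m = if h : m < n then v ⟨m, h⟩ else 0)
    (i : Fin n) : (A *ᵥ v) i = V (n - 1 - (i : ℕ)) - V (n - (i : ℕ)) := by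
  have hi := i.isLt
  have step : (A *ᵥ v) i = ∑ j ∈ range n,
      ((if (i : ℕ) + 1 + (j + 1) = n + 1 then V j else 0)
        - (if (i : ℕ) + 1 + (j + 1) = n + 2 then V j else 0)) := by
    rw [← Fin.sum_univ_eq_sum_range (fun j => ((if (i : ℕ) + 1 + (j + 1) = n + 1 then V j else 0)
        - (if (i : ℕ) + 1 + (j + 1) = n + 2 then V j else 0))) n]
    simp only [mulVec, dotProduct]
    refine Finset.sum_congr rfl ?_
    intro j _
    have hj := j.isLt
    rw [hA, hV]
    rw [dif_pos hj]
    split_ifs with h1 h2 <;> first | omega | ring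
  rw [step, Finset.sum_sub_distrib]
  have e1 : (∑ j ∈ range n, if (i : ℕ) + 1 + (j + 1) = n + 1 then V j else 0)
      = V (n - 1 - (i : ℕ)) := by
    have hcongr : ∀ j ∈ range n, (if (i : ℕ) + 1 + (j + 1) = n + 1 then V j else 0)
        = (if j = n - 1 - (i : ℕ) then V j else 0) := by
      intro j _
      exact if_congr (by omega) rfl rfl
    rw [Finset.sum_congr rfl hcongr, Finset.sum_ite_eq' (range n) (n - 1 - (i : ℕ)) V,
      if_pos (Finset.mem_range.2 (by omega))]
  have e2 : (∑ j ∈ range n, if (i : ℕ) + 1 + (j + 1) = n + 2 then V j else 0)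
      = V (n - (i : ℕ)) := by
    have hcongr : ∀ j ∈ range n, (if (i : ℕ) + 1 + (j + 1) = n + 2 then V j else 0)
        = (if j = n - (i : ℕ) then V j else 0) := by
      intro j hj
      have := Finset.mem_range.1 hj
      exact if_congr (by omega) rfl rfl
    rw [Finset.sum_congr rfl hcongr, Finset.sum_ite_eq' (range n) (n - (i : ℕ)) V]
    by_cases h : n - (i : ℕ) < n
    · rw [if_pos (Finset.mem_range.2 h)]
    · rw [if_neg (fun hc => h (Finset.mem_range.1 hc)), hV, dif_neg (by omega)]
  rw [e1, e2]

/-- Bound on the squared norm of `A *ᵥ v`. -/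
lemma stmt12_sumA_le (n : ℕ) (A : Matrix (Fin n) (Fin n) ℝ)
    (hA : ∀ i j : Fin n, A i j =
      if (i : ℕ) + 1 + ((j : ℕ) + 1) = n + 1 then 1
      else if (i : ℕ) + 1 + ((j : ℕ) + 1) = n + 2 then -1
      else 0)
    (v : Fin n → ℝ) :
    ∑ i : Fin n, ((A *ᵥ v) i) ^ 2 ≤ 4 * ∑ j : Fin n, (v j) ^ 2 := by
  set V : ℕ → ℝ := fun m => if h : m < n then v ⟨m, h⟩ else 0 with hVdef
  have hV : ∀ m : ℕ, V m = if h : m < n then v ⟨m, h⟩ else 0 := fun m => rfl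
  have hVn : V n = 0 := by rw [hV, dif_neg (lt_irrefl n)]
  have hsum_v : ∑ j : Fin n, (v j) ^ 2 = ∑ j ∈ range n, (V j) ^ 2 := by
    rw [← Fin.sum_univ_eq_sum_range (fun j => (V j) ^ 2) n]
    exact Finset.sum_congr rfl fun j _ => by rw [hV, dif_pos j.isLt]
  have hAv : ∑ i : Fin n, ((A *ᵥ v) i) ^ 2
      = ∑ i ∈ range n, (V (n - 1 - i) - V (n - i)) ^ 2 := by
    rw [← Fin.sum_univ_eq_sum_range (fun i => (V (n - 1 - i) - V (n - i)) ^ 2) n]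
    exact Finset.sum_congr rfl fun i _ => by
      rw [stmt12_mulVecA n A hA v V hV i]
  have hreflect : ∑ i ∈ range n, (V (n - 1 - i) - V (n - i)) ^ 2
      = ∑ k ∈ range n, (V k - V (k + 1)) ^ 2 := by
    rw [← Finset.sum_range_reflect (fun k => (V k - V (k + 1)) ^ 2) n]
    refine Finset.sum_congr rfl ?_
    intro i hi
    have hi' := Finset.mem_range.1 hi
    have : n - 1 - i + 1 = n - i := by omega
    rw [this]
  have h2 : ∑ k ∈ range n, (V (k + 1)) ^ 2 ≤ ∑ k ∈ range n, (V k) ^ 2 := by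
    have ha := Finset.sum_range_succ' (fun k => (V k) ^ 2) n
    have hb := Finset.sum_range_succ (fun k => (V k) ^ 2) n
    have hc : (V n) ^ 2 = 0 := by rw [hVn]; ring
    have hd := sq_nonneg (V 0)
    linarith
  have hVnonneg : (0:ℝ) ≤ ∑ k ∈ range n, (V k) ^ 2 :=
    Finset.sum_nonneg fun k _ => sq_nonneg _
  calc ∑ i : Fin n, ((A *ᵥ v) i) ^ 2
      = ∑ k ∈ range n, (V k - V (k + 1)) ^ 2 := by rw [hAv, hreflect]
    _ ≤ ∑ k ∈ range n, (2 * (V k) ^ 2 + 2 * (V (k + 1)) ^ 2) :=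
        Finset.sum_le_sum fun k _ => by nlinarith [sq_nonneg (V k + V (k + 1))]
    _ = 2 * (∑ k ∈ range n, (V k) ^ 2) + 2 * (∑ k ∈ range n, (V (k + 1)) ^ 2) := by
        rw [Finset.sum_add_distrib, ← Finset.mul_sum, ← Finset.mul_sum]
    _ ≤ 4 * ∑ k ∈ range n, (V k) ^ 2 := by linarith
    _ = 4 * ∑ j : Fin n, (v j) ^ 2 := by rw [hsum_v]

/-- Injectivity of `A`. -/
lemma stmt12_mulVecA_ne (n : ℕ) (A : Matrix (Fin n) (Fin n) ℝ)
    (hA : ∀ i j : Fin n, A i j =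
      if (i : ℕ) + 1 + ((j : ℕ) + 1) = n + 1 then 1
      else if (i : ℕ) + 1 + ((j : ℕ) + 1) = n + 2 then -1
      else 0)
    (y : Fin n → ℝ) (hy : ∃ k, y k ≠ 0) : ∃ i, (A *ᵥ y) i ≠ 0 := by
  by_contra h
  push_neg at h
  obtain ⟨k, hk⟩ := hy
  have npos : 0 < n := k.pos
  set W : ℕ → ℝ := fun m => if h : m < n then y ⟨m, h⟩ else 0 with hWdef
  have hW : ∀ m : ℕ, W m = if h : m < n then y ⟨m, h⟩ else 0 := fun m => rfl
  have hWn : W n = 0 := by rw [hW, dif_neg (lt_irrefl n)]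
  have heq : ∀ i : Fin n, W (n - 1 - (i : ℕ)) - W (n - (i : ℕ)) = 0 := by
    intro i
    rw [← stmt12_mulVecA n A hA y W hW i]
    exact h i
  have main : ∀ d m : ℕ, m + d = n - 1 → W m = 0 := by
    intro d
    induction d with
    | zero =>
      intro m hm
      have h0 := heq ⟨0, npos⟩
      simp only [Nat.sub_zero] at h0
      rw [hWn] at h0
      have : m = n - 1 := by omega
      rw [this]; linarith
    | succ d ih =>
      intro m hm
      have hd1 : d + 1 < n := by omega
      have hstep := heq ⟨d + 1, hd1⟩
      have e1 : n - 1 - (d + 1) = m := by omega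
      have e2 : n - (d + 1) = m + 1 := by omega
      rw [e1, e2] at hstep
      have := ih (m + 1) (by omega)
      linarith
  have : y k = 0 := by
    have hk' := k.isLt
    have := main (n - 1 - (k : ℕ)) (k : ℕ) (by omega)
    rw [hW, dif_pos hk'] at this
    exact this
  exact hk this

/-- Lemma: singular-value bounds for the hard-instance coupling matrix
`M = (-s_min·I  ŝ·A)`. -/
theorem stmt12 (n : ℕ) (s_min s_max : ℝ) (hsmin : 0 < s_min)
    (hsmax : Real.sqrt 5 * s_min ≤ s_max)
    (sh : ℝ) (hsh : sh = Real.sqrt (s_max ^ 2 - s_min ^ 2) / 2)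
    (A : Matrix (Fin n) (Fin n) ℝ)
    (hA : ∀ i j : Fin n, A i j =
      if (i : ℕ) + 1 + ((j : ℕ) + 1) = n + 1 then 1
      else if (i : ℕ) + 1 + ((j : ℕ) + 1) = n + 2 then -1
      else 0)
    (M : Matrix (Fin n) (Fin n ⊕ Fin n) ℝ)
    (hM : M = Matrix.fromCols ((-s_min) • (1 : Matrix (Fin n) (Fin n) ℝ)) (sh • A)) :
    (∀ x : EuclideanSpace ℝ (Fin n ⊕ Fin n),
      ‖Matrix.toEuclideanLin M x‖ ≤ s_max * ‖x‖) ∧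
    (∀ y : EuclideanSpace ℝ (Fin n), y ≠ 0 →
      s_min * ‖y‖ < ‖Matrix.toEuclideanLin Mᵀ y‖) := by
  -- scalar facts
  have h1le : (1:ℝ) ≤ Real.sqrt 5 := by
    rw [show (1:ℝ) = Real.sqrt 1 by rw [Real.sqrt_one]]
    exact Real.sqrt_le_sqrt (by norm_num)
  have hs0 : 0 < s_max := lt_of_lt_of_le (by nlinarith) hsmax
  have h5 : 5 * s_min ^ 2 ≤ s_max ^ 2 := by
    have h' : (Real.sqrt 5 * s_min) ^ 2 ≤ s_max ^ 2 :=
      pow_le_pow_left₀ (by positivity) hsmax 2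
    rwa [mul_pow, Real.sq_sqrt (by norm_num : (0:ℝ) ≤ 5)] at h'
  have hshsq : sh ^ 2 = (s_max ^ 2 - s_min ^ 2) / 4 := by
    rw [hsh, div_pow, Real.sq_sqrt (by nlinarith)]
    norm_num
  have hsh0 : 0 < sh := by
    rw [hsh]
    exact div_pos (Real.sqrt_pos.2 (by nlinarith)) (by norm_num)
  have hkey : s_min ^ 2 + 4 * sh ^ 2 = s_max ^ 2 := by rw [hshsq]; ring
  have hAT : Aᵀ = A := by
    ext i j
    rw [transpose_apply, hA, hA]
    have hcomm : (j : ℕ) + 1 + ((i : ℕ) + 1) = (i : ℕ) + 1 + ((j : ℕ) + 1) := by ring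
    rw [hcomm]
  constructor
  · -- upper bound
    intro x
    set u : Fin n → ℝ := fun i => x (Sum.inl i) with hu
    set v : Fin n → ℝ := fun i => x (Sum.inr i) with hv
    have hxfun : (x : Fin n ⊕ Fin n → ℝ) = Sum.elim u v := by
      funext i; cases i <;> rfl
    have hMx : ∀ i : Fin n, (Matrix.toEuclideanLin M x) i
        = -s_min * u i + sh * (A *ᵥ v) i := by
      intro i
      have : (Matrix.toEuclideanLin M x) i = (M *ᵥ (x : Fin n ⊕ Fin n → ℝ)) i := rfl
      rw [this, hxfun, hM, Matrix.fromCols_mulVec_sumElim]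
      simp [Matrix.neg_mulVec, Matrix.smul_mulVec, Matrix.one_mulVec]
    have hnormMx : ‖Matrix.toEuclideanLin M x‖
        = Real.sqrt (∑ i : Fin n, (-s_min * u i + sh * (A *ᵥ v) i) ^ 2) := by
      rw [EuclideanSpace.norm_eq]
      congr 1
      refine Finset.sum_congr rfl ?_
      intro i _
      rw [Real.norm_eq_abs, sq_abs, hMx i]
    have hnormx : ‖x‖ = Real.sqrt (∑ i : Fin n, (u i) ^ 2 + ∑ i : Fin n, (v i) ^ 2) := by
      rw [EuclideanSpace.norm_eq]
      congr 1
      rw [Fintype.sum_sum_type]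
      congr 1 <;> exact Finset.sum_congr rfl fun i _ => by rw [Real.norm_eq_abs, sq_abs]
    have hAv := stmt12_sumA_le n A hA v
    have hsum : ∑ i : Fin n, (-s_min * u i + sh * (A *ᵥ v) i) ^ 2
        ≤ s_max ^ 2 * (∑ i : Fin n, (u i) ^ 2 + ∑ i : Fin n, (v i) ^ 2) := by
      have hpt : ∀ i ∈ (Finset.univ : Finset (Fin n)),
          (-s_min * u i + sh * (A *ᵥ v) i) ^ 2
            ≤ (s_min ^ 2 + 4 * sh ^ 2) * ((u i) ^ 2 + ((A *ᵥ v) i) ^ 2 / 4) := by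
        intro i _
        nlinarith [sq_nonneg (s_min * ((A *ᵥ v) i) + 4 * sh * u i)]
      calc ∑ i : Fin n, (-s_min * u i + sh * (A *ᵥ v) i) ^ 2
          ≤ ∑ i : Fin n, (s_min ^ 2 + 4 * sh ^ 2) * ((u i) ^ 2 + ((A *ᵥ v) i) ^ 2 / 4) :=
            Finset.sum_le_sum hpt
        _ = (s_min ^ 2 + 4 * sh ^ 2)
            * (∑ i : Fin n, (u i) ^ 2 + (∑ i : Fin n, ((A *ᵥ v) i) ^ 2) / 4) := by
            rw [← Finset.mul_sum]
            congr 1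
            rw [Finset.sum_add_distrib, Finset.sum_div]
        _ ≤ s_max ^ 2 * (∑ i : Fin n, (u i) ^ 2 + ∑ i : Fin n, (v i) ^ 2) := by
            rw [hkey]
            have hu2 : (0:ℝ) ≤ ∑ i : Fin n, (u i) ^ 2 :=
              Finset.sum_nonneg fun i _ => sq_nonneg _
            nlinarith [sq_nonneg s_max]
    rw [hnormMx, hnormx]
    calc Real.sqrt (∑ i : Fin n, (-s_min * u i + sh * (A *ᵥ v) i) ^ 2)
        ≤ Real.sqrt (s_max ^ 2 * (∑ i : Fin n, (u i) ^ 2 + ∑ i : Fin n, (v i) ^ 2)) :=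
          Real.sqrt_le_sqrt hsum
      _ = s_max * Real.sqrt (∑ i : Fin n, (u i) ^ 2 + ∑ i : Fin n, (v i) ^ 2) := by
          rw [Real.sqrt_mul (sq_nonneg s_max), Real.sqrt_sq hs0.le]
  · -- lower bound
    intro y hy
    have hy' : ∃ k, y k ≠ 0 := by
      by_contra h
      push_neg at h
      exact hy (by ext k; exact h k)
    obtain ⟨i0, hi0⟩ := stmt12_mulVecA_ne n A hA y hy'
    have hMty : ∀ i : Fin n ⊕ Fin n, (Matrix.toEuclideanLin Mᵀ y) i
        = Sum.elim (fun i => -s_min * y i) (fun i => sh * (A *ᵥ (y : Fin n → ℝ)) i) i := by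
      intro i
      have : (Matrix.toEuclideanLin Mᵀ y) i = (Mᵀ *ᵥ (y : Fin n → ℝ)) i := rfl
      rw [this, hM, Matrix.transpose_fromCols, Matrix.fromRows_mulVec]
      cases i with
      | inl i =>
        simp [Matrix.transpose_smul, Matrix.neg_mulVec, Matrix.smul_mulVec,
          Matrix.one_mulVec]
      | inr i =>
        simp [Matrix.transpose_smul, hAT, Matrix.smul_mulVec]
    have hnormMy : ‖Matrix.toEuclideanLin Mᵀ y‖
        = Real.sqrt (s_min ^ 2 * ∑ i : Fin n, (y i) ^ 2
            + sh ^ 2 * ∑ i : Fin n, ((A *ᵥ (y : Fin n → ℝ)) i) ^ 2) := by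
      rw [EuclideanSpace.norm_eq]
      congr 1
      rw [Fintype.sum_sum_type]
      have e1 : ∑ i : Fin n, ‖(Matrix.toEuclideanLin Mᵀ y) (Sum.inl i)‖ ^ 2
          = s_min ^ 2 * ∑ i : Fin n, (y i) ^ 2 := by
        rw [Finset.mul_sum]
        refine Finset.sum_congr rfl ?_
        intro i _
        rw [Real.norm_eq_abs, sq_abs, hMty (Sum.inl i)]
        simp; ring
      have e2 : ∑ i : Fin n, ‖(Matrix.toEuclideanLin Mᵀ y) (Sum.inr i)‖ ^ 2
          = sh ^ 2 * ∑ i : Fin n, ((A *ᵥ (y : Fin n → ℝ)) i) ^ 2 := by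
        rw [Finset.mul_sum]
        refine Finset.sum_congr rfl ?_
        intro i _
        rw [Real.norm_eq_abs, sq_abs, hMty (Sum.inr i)]
        simp; ring
      rw [e1, e2]
    have hnormy : s_min * ‖y‖ = Real.sqrt (s_min ^ 2 * ∑ i : Fin n, (y i) ^ 2) := by
      rw [EuclideanSpace.norm_eq, Real.sqrt_mul (sq_nonneg s_min), Real.sqrt_sq hsmin.le]
      congr 2
      exact Finset.sum_congr rfl fun i _ => by rw [Real.norm_eq_abs, sq_abs]
    rw [hnormy, hnormMy]
    apply Real.sqrt_lt_sqrt (by positivity)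
    have hpos : 0 < ∑ i : Fin n, ((A *ᵥ (y : Fin n → ℝ)) i) ^ 2 := by
      refine Finset.sum_pos' (fun i _ => sq_nonneg _) ⟨i0, Finset.mem_univ i0, ?_⟩
      exact lt_of_le_of_ne (sq_nonneg _) (Ne.symm (pow_ne_zero 2 hi0))
    nlinarith [mul_pos (pow_pos hsh0 2) hpos]
end

section
/- Let L ≥ μ > 0 and s_max ≥ √5·s_min > 0, set ŝ = √(s_max² − s_min²)/2 and α = (L/μ)·(ŝ²/s_min²). Let A be the n×n matrix with A_{ij} = 1 if i + j = n + 1, A_{ij} = −1 if i + j = n + 2, and A_{ij} = 0 otherwise, and let h ∈ ℝ^n. Then the matrix I + α·A² is invertible, and the vectors x₁* = (ŝ/(μ·s_min))·(I + αA²)⁻¹·A·h, x₂* = (1/μ)·(I + αA²)⁻¹·h, and y* = (L/μ)·(ŝ/s_min²)·(I + αA²)⁻¹·A·h satisfy the first-order saddle-point system: L·x₁* − s_min·y* = 0, μ·x₂* + ŝ·A·y* = h, and s_min·x₁* − ŝ·A·x₂* = 0. (These are exactly the optimality conditions ∇f(x*) + Mᵀy* = 0 and Mx* = 0 for the instance f(x₁,x₂)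 = (L/2)‖x₁‖² + (μ/2)‖x₂‖² − ⟪h, x₂⟫, M = (−s_min·I ŝ·A), b = 0.) -/
open Matrix

/-- Lemma: closed-form saddle point of the hard instance
`f(x₁,x₂) = (L/2)‖x₁‖² + (μ/2)‖x₂‖² − ⟪h,x₂⟫`, `M = (−s_min·I  ŝ·A)`, `b = 0`. -/
theorem stmt13 (n : ℕ) (L μ s_min s_max : ℝ)
    (hμ : 0 < μ) (hμL : μ ≤ L) (hsmin : 0 < s_min)
    (hsmax : Real.sqrt 5 * s_min ≤ s_max)
    (sh α : ℝ) (hsh : sh = Real.sqrt (s_max ^ 2 - s_min ^ 2) / 2)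
    (hα : α = L / μ * (sh ^ 2 / s_min ^ 2))
    (A : Matrix (Fin n) (Fin n) ℝ)
    (hA : ∀ i j : Fin n, A i j =
      if (i : ℕ) + 1 + ((j : ℕ) + 1) = n + 1 then 1
      else if (i : ℕ) + 1 + ((j : ℕ) + 1) = n + 2 then -1
      else 0)
    (h : Fin n → ℝ)
    (x1 x2 ys : Fin n → ℝ)
    (hx1 : x1 = (sh / (μ * s_min)) • ((1 + α • A ^ 2)⁻¹ * A).mulVec h)
    (hx2 : x2 = (1 / μ) • ((1 + α • A ^ 2)⁻¹).mulVec h)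
    (hys : ys = (L / μ * (sh / s_min ^ 2)) • ((1 + α • A ^ 2)⁻¹ * A).mulVec h) :
    IsUnit (1 + α • A ^ 2) ∧
    L • x1 - s_min • ys = 0 ∧
    μ • x2 + sh • A.mulVec ys = h ∧
    s_min • x1 - sh • A.mulVec x2 = 0 := by
  have hL : (0:ℝ) < L := lt_of_lt_of_le hμ hμL
  have hα0 : 0 ≤ α := by rw [hα]; positivity
  -- A is symmetric
  have hsymm : Aᵀ = A := by
    ext i j
    rw [transpose_apply, hA, hA]
    have e : (j : ℕ) + 1 + ((i : ℕ) + 1) = (i : ℕ) + 1 + ((j : ℕ) + 1) := by ring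
    rw [e]
  have hHerm : Aᴴ = A := by
    simpa [conjTranspose_eq_transpose_of_trivial] using hsymm
  set C : Matrix (Fin n) (Fin n) ℝ := 1 + α • A ^ 2 with hC
  -- positive definiteness of C
  have hAsq : (A ^ 2).PosSemidef := by
    have := posSemidef_conjTranspose_mul_self A
    rwa [hHerm, ← pow_two] at this
  have hsmulPSD : (α • A ^ 2).PosSemidef := by
    have hherm : (α • A ^ 2).IsHermitian := by
      rw [Matrix.IsHermitian, conjTranspose_smul, hAsq.1.eq]
      simp
    refine ⟨hherm, fun x => ?_⟩
    refine le_of_le_of_eq (smul_nonneg hα0 (hAsq.2 x)) ?_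
    simp only [smul_eq_mul, Finsupp.mul_sum, Matrix.smul_apply, star_trivial]
    congr 1; funext i xi; congr 1; funext j xj; ring
  have hPD : C.PosDef := Matrix.PosDef.add_posSemidef Matrix.PosDef.one hsmulPSD
  have hdet : IsUnit C.det := isUnit_iff_ne_zero.mpr hPD.det_pos.ne'
  have hUnit : IsUnit C := (Matrix.isUnit_iff_isUnit_det C).mpr hdet
  -- A commutes with C and with C⁻¹
  have hcomm : A * C = C * A := by
    simp only [hC, mul_add, add_mul, mul_one, one_mul, Matrix.mul_smul, Matrix.smul_mul]
    rw [show A * A ^ 2 = A ^ 2 * A by rw [← pow_succ, ← pow_succ']]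
  have hinvcomm : A * C⁻¹ = C⁻¹ * A := by
    calc A * C⁻¹ = C⁻¹ * C * (A * C⁻¹) := by rw [Matrix.nonsing_inv_mul C hdet, one_mul]
    _ = C⁻¹ * (C * A) * C⁻¹ := by simp only [Matrix.mul_assoc]
    _ = C⁻¹ * (A * C) * C⁻¹ := by rw [hcomm]
    _ = C⁻¹ * A * (C * C⁻¹) := by simp only [Matrix.mul_assoc]
    _ = C⁻¹ * A := by rw [Matrix.mul_nonsing_inv C hdet, mul_one]
  refine ⟨hUnit, ?_, ?_, ?_⟩
  · rw [hx1, hys, smul_smul, smul_smul, sub_eq_zero]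
    congr 1
    field_simp
  · rw [hx2, hys, mulVec_smul, smul_smul, smul_smul, mulVec_mulVec]
    have hcoef : μ * (1 / μ) = 1 := by field_simp
    have hcoef2 : sh * (L / μ * (sh / s_min ^ 2)) = α := by rw [hα]; field_simp
    rw [show A * (C⁻¹ * A) = C⁻¹ * A ^ 2 by
      rw [← Matrix.mul_assoc, hinvcomm, Matrix.mul_assoc, ← pow_two]]
    rw [hcoef, hcoef2, one_smul, ← smul_mulVec, ← add_mulVec, ← Matrix.mul_smul]
    rw [show C⁻¹ + C⁻¹ * (α • A ^ 2) = C⁻¹ * C by rw [hC, mul_add, mul_one]]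
    rw [Matrix.nonsing_inv_mul C hdet, Matrix.one_mulVec]
  · rw [hx1, hx2, mulVec_smul, smul_smul, smul_smul, mulVec_mulVec, hinvcomm, sub_eq_zero]
    congr 1
    field_simp
end

section
/- Let L ≥ μ > 0 and s_max ≥ √5·s_min > 0, set ŝ = √(s_max² − s_min²)/2, α = (L/μ)·(ŝ²/s_min²), q = 1 − (√(1 + 4α) − 1)/(2α), ĥ = ((1+α)q − αq²)·e₁ ∈ ℝ^n, and y* = (I + αA²)⁻¹·ĥ, where A is the n×n matrix with A_{ij} = 1 if i + j = n + 1, A_{ij} = −1 if i + j = n + 2, and 0 otherwise. Suppose the integer k satisfies 1 ≤ k ≤ n/2 and suppose n is large enough that (2 + 2√2)·α·q^{n/2} ≤ 1 (equivalently n ≥ 2·log_{1/q}((2 + 2√2)·α)). Then every y ∈ ℝ^n whose coordinates vanish beyond the first k (y_j = 0 for all j > k) satisfies ‖y − y*‖ ≥ (q^k/(2√2))·‖y*‖. In particular, with initialization y⁰ = 0, every iterate y^{2k} of a first-order method (which lies in span{e₁,…,e_k}) satisfies ‖y^{2k} − y*‖ ≥ (q^k/(2√2))·‖y⁰ − y*‖.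 -/
open Matrix

set_option maxHeartbeats 2000000 in
private lemma stmt15_aux1 (L μ s_min s_max sh α q : ℝ)
    (hμ : 0 < μ) (hμL : μ ≤ L) (hsmin : 0 < s_min)
    (hsmax : Real.sqrt 5 * s_min ≤ s_max)
    (hsh : sh = Real.sqrt (s_max ^ 2 - s_min ^ 2) / 2)
    (hα : α = L / μ * (sh ^ 2 / s_min ^ 2))
    (hq : q = 1 - (Real.sqrt (1 + 4 * α) - 1) / (2 * α)) :
    1 ≤ α ∧ 0 < q ∧ q < 1 ∧ α*q^2 - (1+2*α)*q + α = 0 := by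
  have h5 : 5 * s_min^2 ≤ s_max^2 := by
    have h0 : (0:ℝ) ≤ Real.sqrt 5 * s_min := by positivity
    have := mul_le_mul hsmax hsmax h0 (le_trans h0 hsmax)
    nlinarith [Real.sq_sqrt (show (0:ℝ) ≤ 5 by norm_num)]
  have hsh2 : sh^2 = (s_max^2 - s_min^2)/4 := by
    rw [hsh, div_pow, Real.sq_sqrt (by nlinarith)]; norm_num
  have hα1 : 1 ≤ α := by
    have h1 : 1 ≤ L / μ := (one_le_div hμ).2 hμL
    have h2 : 1 ≤ sh^2 / s_min^2 := by
      rw [hsh2, le_div_iff₀ (by positivity)]; nlinarith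
    rw [hα]; nlinarith
  have hα0 : 0 < α := lt_of_lt_of_le one_pos hα1
  have hsq : Real.sqrt (1+4*α) ^ 2 = 1 + 4*α := Real.sq_sqrt (by linarith)
  have hs1 : 1 < Real.sqrt (1+4*α) := by nlinarith [Real.sqrt_nonneg (1+4*α)]
  have hs2 : Real.sqrt (1+4*α) < 1 + 2*α := by nlinarith [Real.sqrt_nonneg (1+4*α)]
  have hq1 : q < 1 := by
    rw [hq]
    have : 0 < (Real.sqrt (1+4*α) - 1)/(2*α) := div_pos (by linarith) (by linarith)
    linarith
  have hq0 : 0 < q := by rw [hq, sub_pos, div_lt_one (by linarith)]; linarith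
  have hquad : α*q^2 - (1+2*α)*q + α = 0 := by
    have hq' : 2*α*q = 2*α + 1 - Real.sqrt (1+4*α) := by rw [hq]; field_simp; ring
    nlinarith [hq', hsq]
  exact ⟨hα1, hq0, hq1, hquad⟩

set_option maxHeartbeats 2000000 in

private lemma stmt15_aux2 (n : ℕ) (hn2 : 2 ≤ n) (α q c : ℝ) (hα0 : 0 < α) (hq0 : 0 < q)
    (hquad : α*q^2 - (1+2*α)*q + α = 0) (hc : c = (1 + α) * q - α * q ^ 2)
    (A : Matrix (Fin n) (Fin n) ℝ)
    (hA : ∀ i j : Fin n, A i j =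
      if (i : ℕ) + 1 + ((j : ℕ) + 1) = n + 1 then 1
      else if (i : ℕ) + 1 + ((j : ℕ) + 1) = n + 2 then -1
      else 0)
    (x : Fin n → ℝ)
    (hx : x = (1 + α • A^2)⁻¹ *ᵥ (fun i : Fin n => if (i:ℕ) = 0 then c else 0)) :
    Real.sqrt (∑ j, (x j - q^((j:ℕ)+1))^2) ≤ α*q^(n+1) := by
  classical
  set M : Matrix (Fin n) (Fin n) ℝ := 1 + α • A ^ 2 with hMdef
  -- the action of A on vectors
  have hAapp : ∀ (x : Fin n → ℝ) (i : Fin n),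
      (A *ᵥ x) i = x ⟨n-1-(i:ℕ), by omega⟩
        - (if h : 1 ≤ (i:ℕ) then x ⟨n-(i:ℕ), by omega⟩ else 0) := by
    intro x i
    have hmv : (A *ᵥ x) i = ∑ j : Fin n, A i j * x j := rfl
    rw [hmv]
    by_cases hi : 1 ≤ (i:ℕ)
    · have hpt : ∀ j : Fin n, A i j * x j =
          (if j = (⟨n-1-(i:ℕ), by omega⟩ : Fin n) then x j else 0)
          + (if j = (⟨n-(i:ℕ), by omega⟩ : Fin n) then -(x j) else 0) := by
        intro j
        rw [hA]
        have h1 : (j = (⟨n-1-(i:ℕ), by omega⟩ : Fin n)) ↔ (i:ℕ) + 1 + ((j:ℕ)+1) = n+1 := by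
          rw [Fin.ext_iff]; simp only []; omega
        have h2 : (j = (⟨n-(i:ℕ), by omega⟩ : Fin n)) ↔ (i:ℕ) + 1 + ((j:ℕ)+1) = n+2 := by
          rw [Fin.ext_iff]; simp only []; omega
        split_ifs with c1 c2 <;> simp_all
      rw [Finset.sum_congr rfl (fun j _ => hpt j), Finset.sum_add_distrib]
      rw [Finset.sum_ite_eq' Finset.univ, Finset.sum_ite_eq' Finset.univ]
      simp [hi]; ring
    · have hpt : ∀ j : Fin n, A i j * x j =
          (if j = (⟨n-1-(i:ℕ), by omega⟩ : Fin n) then x j else 0) := by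
        intro j
        rw [hA]
        have h1 : (j = (⟨n-1-(i:ℕ), by omega⟩ : Fin n)) ↔ (i:ℕ) + 1 + ((j:ℕ)+1) = n+1 := by
          rw [Fin.ext_iff]; simp only []; omega
        have h2 : ¬ ((i:ℕ) + 1 + ((j:ℕ)+1) = n+2) := by have := j.isLt; omega
        split_ifs with c1 c2 <;> simp_all
      rw [Finset.sum_congr rfl (fun j _ => hpt j), Finset.sum_ite_eq' Finset.univ]
      simp [hi]
  -- A is symmetric
  have hAsymm : Aᵀ = A := by
    ext i j
    rw [Matrix.transpose_apply, hA, hA]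
    split_ifs <;> first | rfl | (exfalso; omega)
  have hvm : ∀ x : Fin n → ℝ, x ᵥ* A = A *ᵥ x := by
    intro x
    conv_lhs => rw [← hAsymm]
    rw [Matrix.vecMul_transpose]
  -- quadratic form
  have hquadform : ∀ x : Fin n → ℝ,
      x ⬝ᵥ (M *ᵥ x) = x ⬝ᵥ x + α * ((A *ᵥ x) ⬝ᵥ (A *ᵥ x)) := by
    intro x
    rw [hMdef, Matrix.add_mulVec, Matrix.one_mulVec, Matrix.smul_mulVec,
      dotProduct_add, dotProduct_smul, smul_eq_mul, pow_two, ← Matrix.mulVec_mulVec,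
      Matrix.dotProduct_mulVec, hvm]
  have hdotnn : ∀ v : Fin n → ℝ, 0 ≤ v ⬝ᵥ v :=
    fun v => Finset.sum_nonneg (fun i _ => mul_self_nonneg _)
  -- invertibility
  have hdetu : IsUnit M.det := by
    apply (Matrix.isUnit_iff_isUnit_det M).1
    apply Matrix.mulVec_injective_iff_isUnit.mp
    intro a b hab
    have h0 : M *ᵥ (a - b) = 0 := by rw [Matrix.mulVec_sub, hab, sub_self]
    have h1 := hquadform (a - b)
    rw [h0, dotProduct_zero] at h1
    have h2 : (a-b) ⬝ᵥ (a-b) = 0 := by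
      have := hdotnn (a-b); have := hdotnn (A *ᵥ (a-b)); nlinarith
    have h3 : a - b = 0 := by
      funext i
      have hnn : ∀ j ∈ Finset.univ, 0 ≤ (a-b) j * (a-b) j := fun j _ => mul_self_nonneg _
      have h4 := (Finset.sum_eq_zero_iff_of_nonneg hnn).1 h2 i (Finset.mem_univ i)
      have h5 : ((a-b) i)^2 = 0 := by rw [pow_two]; exact h4
      exact pow_eq_zero_iff (by norm_num) |>.1 h5
    funext i
    have := congrFun h3 i
    simp only [Pi.sub_apply, Pi.zero_apply, sub_eq_zero] at this
    exact this
  -- M *ᵥ x = hh, then clear the inverse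
  have hMx : M *ᵥ x = (fun i : Fin n => if (i:ℕ) = 0 then c else 0) := by
    rw [hx, Matrix.mulVec_mulVec, Matrix.mul_nonsing_inv M hdetu, Matrix.one_mulVec]
  clear hx
  -- the vector yhat
  set yhat : Fin n → ℝ := fun j => q ^ ((j:ℕ)+1) with hyhat
  have hv : ∀ i : Fin n, (A *ᵥ yhat) i
      = q^(n-(i:ℕ)) - (if 1 ≤ (i:ℕ) then q^(n-(i:ℕ)+1) else 0) := by
    intro i
    rw [hAapp]
    have e1 : n-1-(i:ℕ)+1 = n-(i:ℕ) := by omega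
    by_cases hi : 1 ≤ (i:ℕ)
    · rw [dif_pos hi, if_pos hi]
      show q ^ (n-1-(i:ℕ)+1) - q ^ (n-(i:ℕ)+1) = _
      rw [e1]
    · rw [dif_neg hi, if_neg hi]
      show q ^ (n-1-(i:ℕ)+1) - 0 = _
      rw [e1]
  have hw : ∀ i : Fin n, (A *ᵥ (A *ᵥ yhat)) i
      = (q^((i:ℕ)+1) - (if (i:ℕ) ≤ n-2 then q^((i:ℕ)+2) else 0))
        - (if 1 ≤ (i:ℕ) then q^(i:ℕ) - q^((i:ℕ)+1) else 0) := by
    intro i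
    rw [hAapp, hv]
    have e1 : n - (n-1-(i:ℕ)) = (i:ℕ)+1 := by omega
    have e2 : (1 ≤ n-1-(i:ℕ)) ↔ ((i:ℕ) ≤ n-2) := by omega
    by_cases hi : 1 ≤ (i:ℕ)
    · rw [dif_pos hi, hv]
      have e3 : n - (n-(i:ℕ)) = (i:ℕ) := by omega
      have e4 : 1 ≤ n - (i:ℕ) := by omega
      rw [e1, e3, if_pos e4, if_pos hi]
      congr 2
      · by_cases h : (i:ℕ) ≤ n-2
        · rw [if_pos h, if_pos (e2.2 h)]
        · rw [if_neg h, if_neg (fun hh => h (e2.1 hh))]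
    · rw [dif_neg hi, if_neg hi, e1, sub_zero, sub_zero]
      congr 1
      by_cases h : (i:ℕ) ≤ n-2
      · rw [if_pos h, if_pos (e2.2 h)]
      · rw [if_neg h, if_neg (fun hh => h (e2.1 hh))]
  have hMyhat : ∀ i : Fin n, (M *ᵥ yhat) i =
      (if (i:ℕ) = 0 then c else 0) + (if (i:ℕ) = n-1 then α*q^(n+1) else 0) := by
    intro i
    have hMx2 : (M *ᵥ yhat) i = yhat i + α * ((A *ᵥ (A *ᵥ yhat)) i) := by
      rw [hMdef, Matrix.add_mulVec, Matrix.one_mulVec, Matrix.smul_mulVec,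
        pow_two, ← Matrix.mulVec_mulVec]
      simp [smul_eq_mul]
    rw [hMx2, hw]
    show q^((i:ℕ)+1) + α * _ = _
    by_cases hi0 : (i:ℕ) = 0
    · rw [hi0]
      rw [if_pos (by omega : 0 ≤ n-2), if_neg (by omega : ¬ (1:ℕ) ≤ 0),
        if_pos rfl, if_neg (by omega : ¬ (0:ℕ) = n-1)]
      rw [hc]; norm_num; ring
    · by_cases hin : (i:ℕ) = n-1
      · rw [hin]
        rw [if_neg (by omega : ¬ n-1 ≤ n-2), if_pos (by omega : 1 ≤ n-1),
          if_neg (by omega : ¬ n-1 = 0), if_pos rfl]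
        have p1 : q^(n-1+1) = q^(n-1) * q := by rw [← pow_succ]
        have p3 : q^(n+1) = q^(n-1) * q^2 := by rw [← pow_add]; congr 1; omega
        rw [p1, p3]
        linear_combination (-(q^(n-1)):ℝ) * hquad
      · rw [if_pos (by omega : (i:ℕ) ≤ n-2), if_pos (by omega : 1 ≤ (i:ℕ)),
          if_neg hi0, if_neg hin]
        linear_combination (-(q^((i:ℕ))):ℝ) * hquad
  -- the residual
  set r : Fin n → ℝ := x - yhat with hrdef
  set ε : ℝ := α * q^(n+1) with hε
  have hε0 : 0 ≤ ε := by positivity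
  have hMr : ∀ i : Fin n, (M *ᵥ r) i = -(if (i:ℕ) = n-1 then ε else 0) := by
    intro i
    rw [hrdef, Matrix.mulVec_sub]
    show (M *ᵥ x) i - (M *ᵥ yhat) i = _
    rw [hMx, hMyhat i]; ring
  have hRbound : Real.sqrt (r ⬝ᵥ r) ≤ ε := by
    have h1 : r ⬝ᵥ (M *ᵥ r) = -(ε * r ⟨n-1, by omega⟩) := by
      have hpt : ∀ j : Fin n, r j * (M *ᵥ r) j
          = (if j = (⟨n-1, by omega⟩ : Fin n) then -(ε * r j) else 0) := by
        intro j
        rw [hMr j]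
        by_cases hj : (j:ℕ) = n-1
        · rw [if_pos hj, if_pos (by rw [Fin.ext_iff]; exact hj)]; ring
        · rw [if_neg hj, if_neg (by rw [Fin.ext_iff]; exact hj)]; ring
      rw [show r ⬝ᵥ (M *ᵥ r) = ∑ j : Fin n, r j * (M *ᵥ r) j from rfl,
        Finset.sum_congr rfl (fun j _ => hpt j), Finset.sum_ite_eq' Finset.univ]
      simp
    have h2 : r ⬝ᵥ r ≤ r ⬝ᵥ (M *ᵥ r) := by
      rw [hquadform r]
      nlinarith [hdotnn (A *ᵥ r), hα0.le]
    have h3 : |r ⟨n-1, by omega⟩| ≤ Real.sqrt (r ⬝ᵥ r) := by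
      rw [← Real.sqrt_sq_eq_abs]
      apply Real.sqrt_le_sqrt
      rw [pow_two]
      exact Finset.single_le_sum (f := fun j => r j * r j)
        (fun j _ => mul_self_nonneg _) (Finset.mem_univ _)
    have h4 : r ⬝ᵥ r ≤ ε * Real.sqrt (r ⬝ᵥ r) := by
      have hstep : -(ε * r ⟨n-1, by omega⟩) ≤ ε * |r ⟨n-1, by omega⟩| := by
        rw [← mul_neg]
        exact mul_le_mul_of_nonneg_left (neg_le_abs _) hε0
      calc r ⬝ᵥ r ≤ -(ε * r ⟨n-1, by omega⟩) := h2.trans_eq h1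
        _ ≤ ε * |r ⟨n-1, by omega⟩| := hstep
        _ ≤ ε * Real.sqrt (r ⬝ᵥ r) := mul_le_mul_of_nonneg_left h3 hε0
    have hs0 : 0 ≤ Real.sqrt (r ⬝ᵥ r) := Real.sqrt_nonneg _
    have hs2' : Real.sqrt (r ⬝ᵥ r) ^ 2 = r ⬝ᵥ r := Real.sq_sqrt (hdotnn r)
    nlinarith
  have heq : (∑ j, (x j - q^((j:ℕ)+1))^2) = r ⬝ᵥ r := by
    apply Finset.sum_congr rfl
    intro j _
    rw [hrdef, pow_two]
    rfl
  rw [heq]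
  exact hRbound


set_option maxHeartbeats 2000000 in
private lemma stmt15_aux3 (n k : ℕ) (hk1 : 1 ≤ k) (hk2 : 2*k ≤ n) (α q : ℝ)
    (hα0 : 0 < α) (hq0 : 0 < q) (hq1 : q < 1)
    (hn : (2 + 2*Real.sqrt 2) * α * q ^ ((n:ℝ)/2) ≤ 1)
    (ys y : EuclideanSpace ℝ (Fin n))
    (hy : ∀ j : Fin n, k ≤ (j:ℕ) → y j = 0)
    (hRb : Real.sqrt (∑ j, (ys j - q^((j:ℕ)+1))^2) ≤ α*q^(n+1)) :
    q^k/(2*Real.sqrt 2) * ‖ys‖ ≤ ‖y - ys‖ := by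
  classical
  have hkn : k < n := by omega
  set s2 : ℝ := Real.sqrt 2 with hs2def
  have hs2sq : s2^2 = 2 := Real.sq_sqrt (by norm_num)
  have hs2ge1 : 1 ≤ s2 := by nlinarith [Real.sqrt_nonneg 2]
  have hs2pos : 0 < s2 := lt_of_lt_of_le one_pos hs2ge1
  set ε : ℝ := α * q^(n+1) with hεdef
  have hε0 : 0 ≤ ε := by positivity
  have hnormeq : ∀ x : EuclideanSpace ℝ (Fin n), ‖x‖ = Real.sqrt (∑ i, (x i)^2) := by
    intro x
    rw [EuclideanSpace.norm_eq]
    congr 1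
    exact Finset.sum_congr rfl (fun i _ => by rw [Real.norm_eq_abs, sq_abs])
  set E := (WithLp.equiv 2 (Fin n → ℝ)).symm with hE
  set u : EuclideanSpace ℝ (Fin n) := E (fun j => if k ≤ (j:ℕ) then ys j else 0) with hu
  set vh : EuclideanSpace ℝ (Fin n) := E (fun j => if k ≤ (j:ℕ) then q^((j:ℕ)+1) else 0) with hvh
  set w : EuclideanSpace ℝ (Fin n) := E (fun j => q^((j:ℕ)+1)) with hw
  set rv : EuclideanSpace ℝ (Fin n) := E (fun j => ys j - q^((j:ℕ)+1)) with hrv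
  have hu_app : ∀ j, u j = if k ≤ (j:ℕ) then ys j else 0 := fun j => rfl
  have hvh_app : ∀ j, vh j = if k ≤ (j:ℕ) then q^((j:ℕ)+1) else 0 := fun j => rfl
  have hw_app : ∀ j, w j = q^((j:ℕ)+1) := fun j => rfl
  have hrv_app : ∀ j, rv j = ys j - q^((j:ℕ)+1) := fun j => rfl
  have hRb' : ‖rv‖ ≤ ε := by
    rw [hnormeq]
    exact hRb
  -- ys = w + rv
  have hys_split : ys = w + rv := by
    ext j
    show ys j = w j + rv j
    rw [hw_app, hrv_app]; ring
  have hYle : ‖ys‖ ≤ ‖w‖ + ε := by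
    calc ‖ys‖ = ‖w + rv‖ := by rw [hys_split]
      _ ≤ ‖w‖ + ‖rv‖ := norm_add_le _ _
      _ ≤ ‖w‖ + ε := by linarith
  -- ‖vh - u‖ ≤ ε
  have hvu : ‖vh - u‖ ≤ ε := by
    have h1 : ‖vh - u‖ ≤ ‖rv‖ := by
      rw [hnormeq, hnormeq]
      apply Real.sqrt_le_sqrt
      apply Finset.sum_le_sum
      intro j _
      have : (vh - u) j = vh j - u j := rfl
      rw [this, hvh_app, hu_app, hrv_app]
      by_cases hj : k ≤ (j:ℕ)
      · rw [if_pos hj, if_pos hj]; nlinarith [sq_nonneg (q^((j:ℕ)+1) - ys j)]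
      · rw [if_neg hj, if_neg hj]; simp [sq_nonneg]
    linarith
  have hBu : ‖vh‖ - ε ≤ ‖u‖ := by
    have := norm_sub_norm_le vh u
    linarith [this.trans hvu]
  -- ‖u‖ ≤ ‖y - ys‖
  have huD : ‖u‖ ≤ ‖y - ys‖ := by
    rw [hnormeq, hnormeq]
    apply Real.sqrt_le_sqrt
    apply Finset.sum_le_sum
    intro j _
    have h1 : (y - ys) j = y j - ys j := rfl
    rw [h1, hu_app]
    by_cases hj : k ≤ (j:ℕ)
    · rw [if_pos hj, hy j hj]; nlinarith [sq_nonneg (ys j)]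
    · rw [if_neg hj]; simp [sq_nonneg]
  -- lower bound on ‖vh‖
  have hBlow : q^(k+1) ≤ ‖vh‖ := by
    rw [hnormeq]
    have h1 : (q^(k+1))^2 ≤ ∑ i, (vh i)^2 := by
      have := Finset.single_le_sum (f := fun i : Fin n => (vh i)^2)
        (fun i _ => sq_nonneg _) (Finset.mem_univ (⟨k, hkn⟩ : Fin n))
      have h2 : vh ⟨k, hkn⟩ = q^(k+1) := by
        rw [hvh_app]
        exact if_pos (le_refl k)
      simpa [h2] using this
    calc q^(k+1) = Real.sqrt ((q^(k+1))^2) := (Real.sqrt_sq (by positivity)).symm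
      _ ≤ _ := Real.sqrt_le_sqrt h1
  -- q^k ‖w‖ ≤ s2 ‖vh‖
  have hkey : q^k * ‖w‖ ≤ s2 * ‖vh‖ := by
    have hP : ‖w‖^2 = ∑ j ∈ Finset.range n, (q^(j+1))^2 := by
      rw [hnormeq, Real.sq_sqrt (Finset.sum_nonneg (fun i _ => sq_nonneg _))]
      rw [← Fin.sum_univ_eq_sum_range (fun j => (q^(j+1))^2) n]
      exact Finset.sum_congr rfl (fun i _ => by rw [hw_app])
    have hT : ‖vh‖^2 = ∑ j ∈ Finset.Ico k n, (q^(j+1))^2 := by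
      rw [hnormeq, Real.sq_sqrt (Finset.sum_nonneg (fun i _ => sq_nonneg _))]
      have h1 : ∀ j : Fin n, (vh j)^2 = (if k ≤ (j:ℕ) then (q^((j:ℕ)+1))^2 else 0) := by
        intro j; rw [hvh_app]; split_ifs <;> simp
      rw [Finset.sum_congr rfl (fun j _ => h1 j)]
      rw [Fin.sum_univ_eq_sum_range (fun j => if k ≤ j then (q^(j+1))^2 else 0) n]
      rw [Finset.sum_ite, Finset.sum_const, smul_zero, add_zero]
      apply Finset.sum_congr _ (fun j _ => rfl)
      ext j
      simp only [Finset.mem_filter, Finset.mem_range, Finset.mem_Ico]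
      omega
    have hsplit : ∑ j ∈ Finset.range n, (q^(j+1))^2
        = (∑ j ∈ Finset.range k, (q^(j+1))^2) + ∑ j ∈ Finset.Ico k n, (q^(j+1))^2 := by
      rw [Finset.range_eq_Ico, ← Finset.sum_Ico_consecutive _ (Nat.zero_le k)  (by omega : k ≤ n), Finset.range_eq_Ico]
    have hre : q^(2*k) * ∑ j ∈ Finset.range k, (q^(j+1))^2
        = ∑ j ∈ Finset.Ico k (2*k), (q^(j+1))^2 := by
      rw [Finset.sum_Ico_eq_sum_range]
      rw [show 2*k - k = k from by omega, Finset.mul_sum]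
      apply Finset.sum_congr rfl
      intro j _
      ring
    have hsub : ∑ j ∈ Finset.Ico k (2*k), (q^(j+1))^2 ≤ ∑ j ∈ Finset.Ico k n, (q^(j+1))^2 := by
      apply Finset.sum_le_sum_of_subset_of_nonneg
      · apply Finset.Ico_subset_Ico le_rfl hk2
      · intro j _ _; exact sq_nonneg _
    have hq2k1 : q^(2*k) ≤ 1 := pow_le_one₀ hq0.le hq1.le
    have hTnn : 0 ≤ ∑ j ∈ Finset.Ico k n, (q^(j+1))^2 :=
      Finset.sum_nonneg (fun j _ => sq_nonneg _)
    have hmain : q^(2*k) * ‖w‖^2 ≤ 2 * ‖vh‖^2 := by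
      rw [hP, hT, hsplit, mul_add]
      have h1 : q^(2*k) * ∑ j ∈ Finset.Ico k n, (q^(j+1))^2
          ≤ ∑ j ∈ Finset.Ico k n, (q^(j+1))^2 := by
        nlinarith
      linarith [hre ▸ hsub]
    have hln : 0 ≤ q^k * ‖w‖ := by positivity
    have hrn : 0 ≤ s2 * ‖vh‖ := by positivity
    have hsq : (q^k * ‖w‖)^2 ≤ (s2 * ‖vh‖)^2 := by
      have e1 : (q^k * ‖w‖)^2 = q^(2*k) * ‖w‖^2 := by ring
      have e2 : (s2 * ‖vh‖)^2 = 2 * ‖vh‖^2 := by rw [mul_pow, hs2sq]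
      rw [e1, e2]; exact hmain
    nlinarith
  -- ε is small : (2+2 s2) ε ≤ q^(k+1)
  have hεsmall : (2+2*s2) * ε ≤ q^(k+1) := by
    have hsplitpow : q^(n+1) = q^(n-k) * q^(k+1) := by
      rw [← pow_add]; congr 1; omega
    have hrp : q^(n-k) ≤ q^((n:ℝ)/2) := by
      have h1 : (q:ℝ)^(n-k) = q ^ (((n-k : ℕ) : ℝ)) := by
        rw [Real.rpow_natCast]
      rw [h1]
      apply Real.rpow_le_rpow_of_exponent_ge hq0 hq1.le
      rw [Nat.cast_sub (by omega : k ≤ n)]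
      have h2k : 2*(k:ℝ) ≤ (n:ℝ) := by exact_mod_cast hk2
      linarith
    have h2 : (2+2*s2) * α * q^(n-k) ≤ 1 := by
      calc (2+2*s2) * α * q^(n-k) ≤ (2+2*s2) * α * q^((n:ℝ)/2) := by
            apply mul_le_mul_of_nonneg_left hrp (by positivity)
        _ ≤ 1 := hn
    calc (2+2*s2) * ε = ((2+2*s2) * α * q^(n-k)) * q^(k+1) := by
          rw [hεdef, hsplitpow]; ring
      _ ≤ 1 * q^(k+1) := by
          apply mul_le_mul_of_nonneg_right h2 (by positivity)
      _ = q^(k+1) := one_mul _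
  -- final assembly
  have hqk1 : q^k ≤ 1 := pow_le_one₀ hq0.le hq1.le
  have hqk0 : 0 ≤ q^k := by positivity
  rw [div_mul_eq_mul_div, div_le_iff₀ (by positivity)]
  have hD0 : 0 ≤ ‖y - ys‖ := norm_nonneg _
  have hB0 : 0 ≤ ‖vh‖ := norm_nonneg _
  have hchain1 : q^k * ‖ys‖ ≤ s2 * ‖vh‖ + ε := by
    calc q^k * ‖ys‖ ≤ q^k * (‖w‖ + ε) := by
          apply mul_le_mul_of_nonneg_left hYle hqk0
      _ = q^k * ‖w‖ + q^k * ε := by ring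
      _ ≤ s2 * ‖vh‖ + 1 * ε := by
          apply add_le_add hkey
          apply mul_le_mul_of_nonneg_right hqk1 hε0
      _ = s2 * ‖vh‖ + ε := by ring
  have hBeps : (2+2*s2) * ε ≤ ‖vh‖ := hεsmall.trans hBlow
  have hDlow : ‖vh‖ - ε ≤ ‖y - ys‖ := hBu.trans huD
  nlinarith [mul_le_mul_of_nonneg_left hDlow (by positivity : (0:ℝ) ≤ 2*s2),
    mul_le_mul_of_nonneg_left hBeps (by positivity : (0:ℝ) ≤ s2)]

set_option maxHeartbeats 2000000 in
/-- Lemma: lower bound on `‖y − y*‖` for any vector `y` supported on the first `k`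
coordinates (as the iterates of first-order methods are). -/
theorem stmt15 (n k : ℕ) (hk1 : 1 ≤ k) (hk2 : 2 * k ≤ n)
    (L μ s_min s_max : ℝ)
    (hμ : 0 < μ) (hμL : μ ≤ L) (hsmin : 0 < s_min)
    (hsmax : Real.sqrt 5 * s_min ≤ s_max)
    (sh α q : ℝ) (hsh : sh = Real.sqrt (s_max ^ 2 - s_min ^ 2) / 2)
    (hα : α = L / μ * (sh ^ 2 / s_min ^ 2))
    (hq : q = 1 - (Real.sqrt (1 + 4 * α) - 1) / (2 * α))
    (hn : (2 + 2 * Real.sqrt 2) * α * q ^ ((n : ℝ) / 2) ≤ 1)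
    (A : Matrix (Fin n) (Fin n) ℝ)
    (hA : ∀ i j : Fin n, A i j =
      if (i : ℕ) + 1 + ((j : ℕ) + 1) = n + 1 then 1
      else if (i : ℕ) + 1 + ((j : ℕ) + 1) = n + 2 then -1
      else 0)
    (hh : EuclideanSpace ℝ (Fin n))
    (hhh : hh = ((1 + α) * q - α * q ^ 2) • EuclideanSpace.single (⟨0, by omega⟩ : Fin n) (1 : ℝ))
    (ys : EuclideanSpace ℝ (Fin n))
    (hys : ys = Matrix.toEuclideanLin (1 + α • A ^ 2)⁻¹ hh) :
    ∀ y : EuclideanSpace ℝ (Fin n),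
      (∀ j : Fin n, k < (j : ℕ) + 1 → y j = 0) →
      q ^ k / (2 * Real.sqrt 2) * ‖ys‖ ≤ ‖y - ys‖ := by
  intro y hy
  have hn2 : 2 ≤ n := by omega
  obtain ⟨hα1, hq0, hq1, hquad⟩ :=
    stmt15_aux1 L μ s_min s_max sh α q hμ hμL hsmin hsmax hsh hα hq
  have hα0 : 0 < α := lt_of_lt_of_le one_pos hα1
  have hRb : Real.sqrt (∑ j, (ys j - q^((j:ℕ)+1))^2) ≤ α*q^(n+1) := by
    apply stmt15_aux2 n hn2 α q ((1+α)*q - α*q^2) hα0 hq0 hquad rfl A hA (fun j => ys j)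
    have hhfun : (fun i : Fin n => hh i)
        = (fun i : Fin n => if (i:ℕ) = 0 then (1+α)*q - α*q^2 else 0) := by
      funext j
      rw [hhh]
      show ((1+α)*q - α*q^2) * (EuclideanSpace.single (⟨0, by omega⟩ : Fin n) (1:ℝ)) j = _
      rw [EuclideanSpace.single_apply]
      by_cases hj : (j:ℕ) = 0
      · rw [if_pos hj, if_pos (by rw [Fin.ext_iff]; exact hj), mul_one]
      · rw [if_neg hj, if_neg (by rw [Fin.ext_iff]; exact hj), mul_zero]
    rw [← hhfun, hys]
    rfl
  exact stmt15_aux3 n k hk1 hk2 α q hα0 hq0 hq1 hn ys y (fun j hj => hy j (by omega)) hRb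
end

section
/- Let 0 < s_min and s_max ≥ √5·s_min, and set ŝ = √(s_max² − s_min²)/2. Let A be the n×n real matrix with A_{ij} = 1 if i + j = n + 1, A_{ij} = −1 if i + j = n + 2, and A_{ij} = 0 otherwise. Let M be the 2n×2n block matrix [[ŝ·A, s_min·I], [−s_min·I, ŝ·A]]. Then ‖Mv‖ ≤ s_max·‖v‖ for every v ∈ ℝ^{2n}, and ‖Mv‖ > s_min·‖v‖ for every nonzero v ∈ ℝ^{2n}; in particular M is invertible, its largest singular value is at most s_max, and its smallest singular value is strictly greater than s_min. -/
open Matrix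

/-- Extension of a vector on `Fin n` to `ℕ` by zero. -/
noncomputable def stmt18Xext (n : ℕ) (x : Fin n → ℝ) : ℕ → ℝ :=
  fun k => if h : k < n then x ⟨k, h⟩ else 0

lemma stmt18_mulA {n : ℕ} (A : Matrix (Fin n) (Fin n) ℝ)
    (hA : ∀ i j : Fin n, A i j =
      if (i : ℕ) + 1 + ((j : ℕ) + 1) = n + 1 then 1
      else if (i : ℕ) + 1 + ((j : ℕ) + 1) = n + 2 then -1
      else 0)
    (x : Fin n → ℝ) (i : Fin n) :
    A.mulVec x i = stmt18Xext n x (n - 1 - (i : ℕ)) - stmt18Xext n x (n - (i : ℕ)) := by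
  have hi := i.isLt
  rcases Nat.eq_zero_or_pos (i : ℕ) with h0 | h0
  · have hval : ∀ j : Fin n, A i j = if j = (⟨n - 1 - (i : ℕ), by omega⟩ : Fin n) then 1 else 0 := by
      intro j
      rw [hA]
      have hj := j.isLt
      split_ifs with h1 h2 h3 <;> simp_all [Fin.ext_iff] <;> omega
    simp only [mulVec, dotProduct, hval, ite_mul, one_mul, zero_mul,
      Finset.sum_ite_eq', Finset.mem_univ, if_true]
    have h1 : stmt18Xext n x (n - 1 - (i : ℕ)) = x ⟨n - 1 - (i : ℕ), by omega⟩ := by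
      simp only [stmt18Xext]
      rw [dif_pos (show n - 1 - (i : ℕ) < n by omega)]
    have h2 : stmt18Xext n x (n - (i : ℕ)) = 0 := by
      have he : n - (i : ℕ) = n := by omega
      simp [stmt18Xext, he]
    rw [h1, h2, sub_zero]
  · have hval : ∀ j : Fin n, A i j =
        (if j = (⟨n - 1 - (i : ℕ), by omega⟩ : Fin n) then 1 else 0)
        - (if j = (⟨n - (i : ℕ), by omega⟩ : Fin n) then 1 else 0) := by
      intro j
      rw [hA]
      have hj := j.isLt
      split_ifs with h1 h2 h3 h4 h5 <;> simp_all [Fin.ext_iff] <;> omega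
    simp only [mulVec, dotProduct, hval, sub_mul, ite_mul, one_mul, zero_mul,
      Finset.sum_sub_distrib, Finset.sum_ite_eq', Finset.mem_univ, if_true]
    have h1 : stmt18Xext n x (n - 1 - (i : ℕ)) = x ⟨n - 1 - (i : ℕ), by omega⟩ := by
      simp only [stmt18Xext]; rw [dif_pos]
    have h2 : stmt18Xext n x (n - (i : ℕ)) = x ⟨n - (i : ℕ), by omega⟩ := by
      simp only [stmt18Xext]; rw [dif_pos]
    rw [h1, h2]

lemma stmt18_sum_sq_eq (n : ℕ) (x : Fin n → ℝ) :
    ∑ i : Fin n, x i ^ 2 = ∑ k ∈ Finset.range n, stmt18Xext n x k ^ 2 := by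
  rw [← Fin.sum_univ_eq_sum_range (fun k => stmt18Xext n x k ^ 2) n]
  apply Finset.sum_congr rfl
  intro i _
  simp [stmt18Xext, i.isLt]

lemma stmt18_sum_refl_sq (n : ℕ) (x : Fin n → ℝ) :
    ∑ i : Fin n, stmt18Xext n x (n - 1 - (i : ℕ)) ^ 2 = ∑ i : Fin n, x i ^ 2 := by
  rw [Fin.sum_univ_eq_sum_range (fun k => stmt18Xext n x (n - 1 - k) ^ 2) n,
    Finset.sum_range_reflect (fun k => stmt18Xext n x k ^ 2) n, stmt18_sum_sq_eq]

lemma stmt18_sum_shift_sq (n : ℕ) (x : Fin n → ℝ) :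
    ∑ i : Fin n, stmt18Xext n x (n - (i : ℕ)) ^ 2 ≤ ∑ i : Fin n, x i ^ 2 := by
  rw [Fin.sum_univ_eq_sum_range (fun k => stmt18Xext n x (n - k) ^ 2) n, stmt18_sum_sq_eq]
  have hr : ∑ k ∈ Finset.range n, stmt18Xext n x (n - k) ^ 2
      = ∑ k ∈ Finset.range n, stmt18Xext n x (k + 1) ^ 2 := by
    rw [← Finset.sum_range_reflect (fun k => stmt18Xext n x (k + 1) ^ 2) n]
    apply Finset.sum_congr rfl
    intro k hk
    rw [Finset.mem_range] at hk
    congr 2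
    omega
  rw [hr]
  have h1 : ∑ k ∈ Finset.range (n + 1), stmt18Xext n x k ^ 2
      = ∑ k ∈ Finset.range n, stmt18Xext n x (k + 1) ^ 2 + stmt18Xext n x 0 ^ 2 :=
    Finset.sum_range_succ' _ n
  have h2 : ∑ k ∈ Finset.range (n + 1), stmt18Xext n x k ^ 2
      = ∑ k ∈ Finset.range n, stmt18Xext n x k ^ 2 + stmt18Xext n x n ^ 2 :=
    Finset.sum_range_succ _ n
  have h3 : stmt18Xext n x n = 0 := by simp [stmt18Xext]
  nlinarith [sq_nonneg (stmt18Xext n x 0)]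

lemma stmt18_A_inj (n : ℕ) (x : Fin n → ℝ)
    (h : ∀ i : Fin n, stmt18Xext n x (n - 1 - (i : ℕ)) - stmt18Xext n x (n - (i : ℕ)) = 0) :
    x = 0 := by
  have key : ∀ d : ℕ, stmt18Xext n x (n - d) = 0 := by
    intro d
    induction d with
    | zero => simp [stmt18Xext]
    | succ d ih =>
      rcases le_or_gt n d with hd | hd
      · have : n - (d + 1) = n - d := by omega
        rw [this, ih]
      · have hi := h ⟨d, hd⟩
        have he : n - 1 - d = n - (d + 1) := by omega
        simp only [he] at hi
        rw [ih] at hi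
        linarith
  funext j
  have hj := j.isLt
  have hx := key (n - (j : ℕ))
  have he : n - (n - (j : ℕ)) = (j : ℕ) := by omega
  rw [he] at hx
  simpa [stmt18Xext, hj] using hx

lemma stmt18_cross (n : ℕ) (A : Matrix (Fin n) (Fin n) ℝ)
    (hA : ∀ i j : Fin n, A i j =
      if (i : ℕ) + 1 + ((j : ℕ) + 1) = n + 1 then 1
      else if (i : ℕ) + 1 + ((j : ℕ) + 1) = n + 2 then -1
      else 0)
    (x y : Fin n → ℝ) :
    ∑ i : Fin n, (A.mulVec x) i * y i = ∑ i : Fin n, x i * (A.mulVec y) i := by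
  have hsym : Aᵀ = A := by
    ext i j
    rw [Matrix.transpose_apply, hA, hA]
    have h : (j : ℕ) + 1 + ((i : ℕ) + 1) = (i : ℕ) + 1 + ((j : ℕ) + 1) := by ring
    rw [h]
  have h1 : ∑ i : Fin n, x i * (A.mulVec y) i = x ⬝ᵥ (A *ᵥ y) := rfl
  have h2 : ∑ i : Fin n, (A.mulVec x) i * y i = (A *ᵥ x) ⬝ᵥ y := rfl
  rw [h1, h2, Matrix.dotProduct_mulVec, ← Matrix.mulVec_transpose, hsym]

/-- Lemma: singular-value bounds for the square block coupling matrix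
`M = [[ŝ·A, s_min·I], [−s_min·I, ŝ·A]]`. -/
theorem stmt18 (n : ℕ) (s_min s_max : ℝ) (hsmin : 0 < s_min)
    (hsmax : Real.sqrt 5 * s_min ≤ s_max)
    (sh : ℝ) (hsh : sh = Real.sqrt (s_max ^ 2 - s_min ^ 2) / 2)
    (A : Matrix (Fin n) (Fin n) ℝ)
    (hA : ∀ i j : Fin n, A i j =
      if (i : ℕ) + 1 + ((j : ℕ) + 1) = n + 1 then 1
      else if (i : ℕ) + 1 + ((j : ℕ) + 1) = n + 2 then -1
      else 0)
    (M : Matrix (Fin n ⊕ Fin n) (Fin n ⊕ Fin n) ℝ)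
    (hM : M = Matrix.fromBlocks (sh • A) (s_min • (1 : Matrix (Fin n) (Fin n) ℝ))
      ((-s_min) • (1 : Matrix (Fin n) (Fin n) ℝ)) (sh • A)) :
    (∀ v : EuclideanSpace ℝ (Fin n ⊕ Fin n),
      ‖Matrix.toEuclideanLin M v‖ ≤ s_max * ‖v‖) ∧
    (∀ v : EuclideanSpace ℝ (Fin n ⊕ Fin n), v ≠ 0 →
      s_min * ‖v‖ < ‖Matrix.toEuclideanLin M v‖) ∧
    IsUnit M := by
  -- numeric facts
  have hsqrt5 : (0:ℝ) < Real.sqrt 5 := Real.sqrt_pos.mpr (by norm_num)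
  have hsmax0 : 0 < s_max := lt_of_lt_of_le (mul_pos hsqrt5 hsmin) hsmax
  have h5 : 5 * s_min ^ 2 ≤ s_max ^ 2 := by
    have h := mul_self_le_mul_self (le_of_lt (mul_pos hsqrt5 hsmin)) hsmax
    have hs : Real.sqrt 5 * s_min * (Real.sqrt 5 * s_min) = 5 * s_min ^ 2 := by
      have : Real.sqrt 5 * Real.sqrt 5 = 5 := Real.mul_self_sqrt (by norm_num)
      nlinarith [this]
    nlinarith [h, hs]
  have hd0 : 0 < s_max ^ 2 - s_min ^ 2 := by nlinarith
  have hsh2 : sh ^ 2 = (s_max ^ 2 - s_min ^ 2) / 4 := by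
    rw [hsh, div_pow, Real.sq_sqrt hd0.le]
    norm_num
  have hshpos : 0 < sh := by
    rw [hsh]
    have := Real.sqrt_pos.mpr hd0
    linarith
  -- matrix facts
  have hbound : ∀ x : Fin n → ℝ,
      ∑ i : Fin n, (A.mulVec x) i ^ 2 ≤ 4 * ∑ i : Fin n, x i ^ 2 := by
    intro x
    have hterm : ∀ i : Fin n, (A.mulVec x) i ^ 2
        ≤ 2 * stmt18Xext n x (n - 1 - (i : ℕ)) ^ 2 + 2 * stmt18Xext n x (n - (i : ℕ)) ^ 2 := by
      intro i
      rw [stmt18_mulA A hA x i]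
      nlinarith [sq_nonneg (stmt18Xext n x (n - 1 - (i : ℕ)) + stmt18Xext n x (n - (i : ℕ)))]
    calc ∑ i : Fin n, (A.mulVec x) i ^ 2
        ≤ ∑ i : Fin n, (2 * stmt18Xext n x (n - 1 - (i : ℕ)) ^ 2
            + 2 * stmt18Xext n x (n - (i : ℕ)) ^ 2) :=
          Finset.sum_le_sum (fun i _ => hterm i)
      _ = 2 * (∑ i : Fin n, stmt18Xext n x (n - 1 - (i : ℕ)) ^ 2)
            + 2 * (∑ i : Fin n, stmt18Xext n x (n - (i : ℕ)) ^ 2) := by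
          rw [Finset.sum_add_distrib, ← Finset.mul_sum, ← Finset.mul_sum]
      _ ≤ 4 * ∑ i : Fin n, x i ^ 2 := by
          have ha := stmt18_sum_refl_sq n x
          have hb := stmt18_sum_shift_sq n x
          linarith
  have hinj : ∀ x : Fin n → ℝ, A.mulVec x = 0 → x = 0 := by
    intro x hx
    apply stmt18_A_inj n x
    intro i
    rw [← stmt18_mulA A hA x i]
    exact congrFun hx i
  -- key identity
  have key : ∀ v : Fin n ⊕ Fin n → ℝ,
      ∑ i : Fin n ⊕ Fin n, (M *ᵥ v) i ^ 2
        = sh ^ 2 * ((∑ i : Fin n, (A *ᵥ (v ∘ Sum.inl)) i ^ 2)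
            + ∑ i : Fin n, (A *ᵥ (v ∘ Sum.inr)) i ^ 2)
          + s_min ^ 2 * ∑ i : Fin n ⊕ Fin n, v i ^ 2 := by
    intro v
    set x := v ∘ Sum.inl with hx
    set y := v ∘ Sum.inr with hy
    have hMv : M *ᵥ v = Sum.elim (fun i => sh * (A *ᵥ x) i + s_min * y i)
        (fun i => -s_min * x i + sh * (A *ᵥ y) i) := by
      rw [hM, Matrix.fromBlocks_mulVec]
      funext i
      cases i <;>
        simp only [Sum.elim_inl, Sum.elim_inr, Matrix.smul_mulVec, Matrix.neg_mulVec,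
          Matrix.one_mulVec, Pi.add_apply, Pi.smul_apply, Pi.neg_apply, smul_eq_mul,
          hx, hy, Function.comp_apply] <;>
        ring
    rw [hMv, Fintype.sum_sum_type, Fintype.sum_sum_type (fun i => v i ^ 2)]
    simp only [Sum.elim_inl, Sum.elim_inr]
    have hc := stmt18_cross n A hA x y
    have e1 : ∑ i : Fin n, (sh * (A *ᵥ x) i + s_min * y i) ^ 2
        = sh ^ 2 * (∑ i : Fin n, (A *ᵥ x) i ^ 2) + s_min ^ 2 * (∑ i : Fin n, y i ^ 2)
          + (2 * sh * s_min) * ∑ i : Fin n, (A *ᵥ x) i * y i := by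
      rw [Finset.mul_sum, Finset.mul_sum, Finset.mul_sum, ← Finset.sum_add_distrib,
        ← Finset.sum_add_distrib]
      apply Finset.sum_congr rfl
      intro i _
      ring
    have e2 : ∑ i : Fin n, (-s_min * x i + sh * (A *ᵥ y) i) ^ 2
        = s_min ^ 2 * (∑ i : Fin n, x i ^ 2) + sh ^ 2 * (∑ i : Fin n, (A *ᵥ y) i ^ 2)
          - (2 * sh * s_min) * ∑ i : Fin n, x i * (A *ᵥ y) i := by
      rw [Finset.mul_sum, Finset.mul_sum, Finset.mul_sum, ← Finset.sum_add_distrib,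
        ← Finset.sum_sub_distrib]
      apply Finset.sum_congr rfl
      intro i _
      ring
    rw [e1, e2, hc]
    simp only [hx, hy, Function.comp_apply]
    ring
  -- plain-vector lower bound
  have lowkey : ∀ v : Fin n ⊕ Fin n → ℝ, v ≠ 0 →
      s_min ^ 2 * ∑ i : Fin n ⊕ Fin n, v i ^ 2 < ∑ i : Fin n ⊕ Fin n, (M *ᵥ v) i ^ 2 := by
    intro v hv
    rw [key v]
    have hsumpos : ∀ w : Fin n → ℝ, w ≠ 0 → 0 < ∑ i : Fin n, w i ^ 2 := by
      intro w hw
      rcases Function.ne_iff.mp hw with ⟨i, hi⟩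
      have h1 : (0:ℝ) < w i ^ 2 :=
        lt_of_le_of_ne (sq_nonneg _) (Ne.symm (pow_ne_zero 2 hi))
      have h2 : w i ^ 2 ≤ ∑ j : Fin n, w j ^ 2 :=
        Finset.single_le_sum (fun j _ => sq_nonneg (w j)) (Finset.mem_univ i)
      linarith
    have hxy : v ∘ Sum.inl ≠ 0 ∨ v ∘ Sum.inr ≠ 0 := by
      by_contra hcon
      push_neg at hcon
      apply hv
      funext i
      cases i with
      | inl a => exact congrFun hcon.1 a
      | inr a => exact congrFun hcon.2 a
    have hpos : 0 < (∑ i : Fin n, (A *ᵥ (v ∘ Sum.inl)) i ^ 2)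
        + ∑ i : Fin n, (A *ᵥ (v ∘ Sum.inr)) i ^ 2 := by
      have hs1 : 0 ≤ ∑ i : Fin n, (A *ᵥ (v ∘ Sum.inl)) i ^ 2 :=
        Finset.sum_nonneg (fun i _ => sq_nonneg _)
      have hs2 : 0 ≤ ∑ i : Fin n, (A *ᵥ (v ∘ Sum.inr)) i ^ 2 :=
        Finset.sum_nonneg (fun i _ => sq_nonneg _)
      rcases hxy with hx | hy
      · have : A *ᵥ (v ∘ Sum.inl) ≠ 0 := fun h => hx (hinj _ h)
        have := hsumpos _ this
        linarith
      · have : A *ᵥ (v ∘ Sum.inr) ≠ 0 := fun h => hy (hinj _ h)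
        have := hsumpos _ this
        linarith
    have : 0 < sh ^ 2 * ((∑ i : Fin n, (A *ᵥ (v ∘ Sum.inl)) i ^ 2)
        + ∑ i : Fin n, (A *ᵥ (v ∘ Sum.inr)) i ^ 2) :=
      mul_pos (pow_pos hshpos 2) hpos
    linarith
  -- Euclidean norms
  have hnorme : ∀ w : EuclideanSpace ℝ (Fin n ⊕ Fin n),
      ‖w‖ = Real.sqrt (∑ i : Fin n ⊕ Fin n, w i ^ 2) := by
    intro w
    rw [EuclideanSpace.norm_eq]
    congr 1
    apply Finset.sum_congr rfl
    intro i _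
    rw [Real.norm_eq_abs, sq_abs]
  have hMvnorm : ∀ v : EuclideanSpace ℝ (Fin n ⊕ Fin n),
      ‖Matrix.toEuclideanLin M v‖
        = Real.sqrt (∑ i : Fin n ⊕ Fin n, (M *ᵥ (fun j => v j)) i ^ 2) := by
    intro v
    rw [hnorme]
    rfl
  refine ⟨?_, ?_, ?_⟩
  · -- upper bound
    intro v
    rw [hMvnorm, hnorme]
    have hkey := key (fun j => v j)
    have h1 := hbound ((fun j => v j) ∘ Sum.inl)
    have h2 := hbound ((fun j => v j) ∘ Sum.inr)
    have hsplit : ∑ i : Fin n ⊕ Fin n, v i ^ 2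
        = (∑ i : Fin n, ((fun j => v j) ∘ Sum.inl) i ^ 2)
          + ∑ i : Fin n, ((fun j => v j) ∘ Sum.inr) i ^ 2 :=
      Fintype.sum_sum_type (fun i => v i ^ 2)
    have hQ1 : 0 ≤ ∑ i : Fin n, ((fun j => v j) ∘ Sum.inl) i ^ 2 :=
      Finset.sum_nonneg (fun i _ => sq_nonneg _)
    have hQ2 : 0 ≤ ∑ i : Fin n, ((fun j => v j) ∘ Sum.inr) i ^ 2 :=
      Finset.sum_nonneg (fun i _ => sq_nonneg _)
    have hP : ∑ i : Fin n ⊕ Fin n, (M *ᵥ (fun j => v j)) i ^ 2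
        ≤ s_max ^ 2 * ∑ i : Fin n ⊕ Fin n, v i ^ 2 := by
      rw [hkey, hsplit]
      nlinarith [hsh2, h1, h2, hQ1, hQ2, hd0]
    calc Real.sqrt (∑ i : Fin n ⊕ Fin n, (M *ᵥ (fun j => v j)) i ^ 2)
        ≤ Real.sqrt (s_max ^ 2 * ∑ i : Fin n ⊕ Fin n, v i ^ 2) := Real.sqrt_le_sqrt hP
      _ = s_max * Real.sqrt (∑ i : Fin n ⊕ Fin n, v i ^ 2) := by
          rw [Real.sqrt_mul (sq_nonneg s_max), Real.sqrt_sq hsmax0.le]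
  · -- lower bound
    intro v hv
    have hv' : (fun j => v j) ≠ 0 := by
      intro h
      apply hv
      ext i
      exact congrFun h i
    have hlow := lowkey (fun j => v j) hv'
    rw [hMvnorm, hnorme]
    have hQ : 0 ≤ ∑ i : Fin n ⊕ Fin n, v i ^ 2 :=
      Finset.sum_nonneg (fun i _ => sq_nonneg _)
    calc s_min * Real.sqrt (∑ i : Fin n ⊕ Fin n, v i ^ 2)
        = Real.sqrt (s_min ^ 2 * ∑ i : Fin n ⊕ Fin n, v i ^ 2) := by
          rw [Real.sqrt_mul (sq_nonneg s_min), Real.sqrt_sq hsmin.le]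
      _ < Real.sqrt (∑ i : Fin n ⊕ Fin n, (M *ᵥ (fun j => v j)) i ^ 2) :=
          Real.sqrt_lt_sqrt (by positivity) hlow
  · -- invertibility
    rw [← Matrix.mulVec_injective_iff_isUnit]
    intro u w huw
    by_contra hne
    have hsub : u - w ≠ 0 := sub_ne_zero.mpr hne
    have h0 : M *ᵥ (u - w) = 0 := by
      rw [Matrix.mulVec_sub, huw, sub_self]
    have hlow := lowkey (u - w) hsub
    rw [h0] at hlow
    simp only [Pi.zero_apply, ne_eq, OfNat.ofNat_ne_zero, not_false_eq_true, zero_pow,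
      Finset.sum_const_zero] at hlow
    have hQ : 0 ≤ ∑ i : Fin n ⊕ Fin n, (u - w) i ^ 2 :=
      Finset.sum_nonneg (fun i _ => sq_nonneg _)
    nlinarith
end
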